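/- arXiv:2601.05856 — 5 statements merged into one kernel-verified Lean document; each statement's English description precedes it below -/
import Mathlib

section
/- For every natural number n with n ≥ 2, n ≠ 4 and n ≠ 5, the number Q(n) of n-queens configurations is divisible by 4. -/
open scoped Classical

/-- The `n × n` board, with squares indexed by `[n] × [n]` where `[n] = {1, …, n}`. -/
def board (n : ℕ) : Finset (ℕ × ℕ) := Finset.Icc 1 n ×ˢ Finset.Icc 1 n

/-- `Q` is an `n`-queens configuration: `Q ⊆ [n] × [n]`, `|Q| = n`, and every row,
column, diagonal (`j - i + n = k`) and anti-diagonal (`i + j - 1 = k`) contains at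
most one element of `Q`. -/
def IsQueensConfig (n : ℕ) (Q : Finset (ℕ × ℕ)) : Prop :=
  Q ⊆ board n ∧ Q.card = n ∧
  (∀ p ∈ Q, ∀ q ∈ Q, p.1 = q.1 → p = q) ∧
  (∀ p ∈ Q, ∀ q ∈ Q, p.2 = q.2 → p = q) ∧
  (∀ p ∈ Q, ∀ q ∈ Q, p.2 + n - p.1 = q.2 + n - q.1 → p = q) ∧
  (∀ p ∈ Q, ∀ q ∈ Q, p.1 + p.2 - 1 = q.1 + q.2 - 1 → p = q)

/-- `Q(n)`: the number of `n`-queens configurations. -/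
noncomputable def queensCount (n : ℕ) : ℕ :=
  ((board n).powerset.filter (fun Q => IsQueensConfig n Q)).card

/-- The vertical reflection `s`, `sQ = {(i, n+1-j) : (i,j) ∈ Q}`. -/
def sAct (n : ℕ) (Q : Finset (ℕ × ℕ)) : Finset (ℕ × ℕ) :=
  Q.image (fun p => (p.1, n + 1 - p.2))

/-- The 90° counter-clockwise rotation `r`, `rQ = {(n+1-j, i) : (i,j) ∈ Q}`. -/
def rAct (n : ℕ) (Q : Finset (ℕ × ℕ)) : Finset (ℕ × ℕ) :=
  Q.image (fun p => (n + 1 - p.2, p.1))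

lemma four_dvd_blocks {α : Type*} [DecidableEq α] (k : α → Finset α) :
    ∀ s : Finset α, (∀ x ∈ s, x ∈ k x) → (∀ x ∈ s, k x ⊆ s) → (∀ x ∈ s, (k x).card = 4) →
    (∀ x ∈ s, ∀ y ∈ k x, k y = k x) → 4 ∣ s.card := by
  intro s
  induction s using Finset.strongInduction with
  | _ s ih =>
    intro h1 h2 h3 h4
    rcases s.eq_empty_or_nonempty with rfl | ⟨x, hx⟩
    · simp
    · have hks : k x ⊆ s := h2 x hx
      have hle : (k x).card ≤ s.card := Finset.card_le_card hks
      have hcard : s.card = (s \ k x).card + 4 := by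
        rw [Finset.card_sdiff_of_subset hks, h3 x hx]
        have := h3 x hx
        omega
      have hsub : s \ k x ⊂ s := Finset.sdiff_ssubset hks ⟨x, h1 x hx⟩
      have key : ∀ y ∈ s \ k x, k y ⊆ s \ k x := by
        intro y hy
        have hys := (Finset.mem_sdiff.mp hy).1
        have hynk := (Finset.mem_sdiff.mp hy).2
        intro z hz
        rw [Finset.mem_sdiff]
        refine ⟨h2 y hys hz, fun hzkx => ?_⟩
        have e1 : k z = k y := h4 y hys z hz
        have e2 : k z = k x := h4 x hx z hzkx
        have hy' : y ∈ k y := h1 y hys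
        rw [e1.symm.trans e2] at hy'
        exact hynk hy'
      have hdvd := ih (s \ k x) hsub
        (fun y hy => h1 y (Finset.mem_sdiff.mp hy).1)
        key
        (fun y hy => h3 y (Finset.mem_sdiff.mp hy).1)
        (fun y hy => h4 y (Finset.mem_sdiff.mp hy).1)
      omega

lemma four_dvd_cycle {α : Type*} [DecidableEq α] (s : Finset α) (f : α → α)
    (hmem : ∀ x ∈ s, f x ∈ s) (h4 : ∀ x ∈ s, f (f (f (f x))) = x)
    (h1 : ∀ x ∈ s, f x ≠ x) (h2 : ∀ x ∈ s, f (f x) ≠ x) : 4 ∣ s.card := by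
  apply four_dvd_blocks (fun x => {x, f x, f (f x), f (f (f x))}) s
  · intro x hx; simp
  · intro x hx z hz
    simp only [Finset.mem_insert, Finset.mem_singleton] at hz
    rcases hz with rfl | rfl | rfl | rfl
    · exact hx
    · exact hmem x hx
    · exact hmem _ (hmem x hx)
    · exact hmem _ (hmem _ (hmem x hx))
  · intro x hx
    have hx1 := hmem x hx
    have hx2 := hmem _ hx1
    have e4 := h4 x hx
    have d1 : f x ≠ x := h1 x hx
    have d2 : f (f x) ≠ x := h2 x hx
    have d3 : f (f (f x)) ≠ x := fun h => d1 (by conv_rhs => rw [← e4]; rw [h])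
    have d4 : f (f x) ≠ f x := h1 _ hx1
    have d5 : f (f (f x)) ≠ f x := h2 _ hx1
    have d6 : f (f (f x)) ≠ f (f x) := h1 _ hx2
    rw [Finset.card_insert_of_notMem (by simp only [Finset.mem_insert, Finset.mem_singleton, not_or]; exact ⟨Ne.symm d1, Ne.symm d2, Ne.symm d3⟩),
        Finset.card_insert_of_notMem (by simp only [Finset.mem_insert, Finset.mem_singleton, not_or]; exact ⟨Ne.symm d4, Ne.symm d5⟩),
        Finset.card_insert_of_notMem (by simp only [Finset.mem_singleton]; exact Ne.symm d6), Finset.card_singleton]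
  · intro x hx y hy
    have e4 := h4 x hx
    simp only [Finset.mem_insert, Finset.mem_singleton] at hy
    rcases hy with rfl | rfl | rfl | rfl
    · rfl
    · ext z; simp only [Finset.mem_insert, Finset.mem_singleton]; rw [e4]; tauto
    · ext z; simp only [Finset.mem_insert, Finset.mem_singleton]; rw [e4]; tauto
    · ext z; simp only [Finset.mem_insert, Finset.mem_singleton]; rw [e4]; tauto

lemma four_dvd_klein {α : Type*} [DecidableEq α] (s : Finset α) (f g : α → α)
    (hf : ∀ x ∈ s, f x ∈ s) (hg : ∀ x ∈ s, g x ∈ s)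
    (hff : ∀ x ∈ s, f (f x) = x) (hgg : ∀ x ∈ s, g (g x) = x)
    (hcomm : ∀ x ∈ s, f (g x) = g (f x))
    (hf1 : ∀ x ∈ s, f x ≠ x) (hg1 : ∀ x ∈ s, g x ≠ x)
    (hfg : ∀ x ∈ s, f (g x) ≠ x) : 4 ∣ s.card := by
  apply four_dvd_blocks (fun x => {x, f x, g x, f (g x)}) s
  · intro x hx; simp
  · intro x hx z hz
    simp only [Finset.mem_insert, Finset.mem_singleton] at hz
    rcases hz with rfl | rfl | rfl | rfl
    · exact hx
    · exact hf x hx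
    · exact hg x hx
    · exact hf _ (hg x hx)
  · intro x hx
    have hgx := hg x hx
    have d1 : f x ≠ x := hf1 x hx
    have d2 : g x ≠ x := hg1 x hx
    have d3 : f (g x) ≠ x := hfg x hx
    have d4 : g x ≠ f x := by
      intro h
      exact hfg x hx (by rw [h, hff x hx])
    have d5 : f (g x) ≠ f x := by
      intro h
      have h2 : f (f (g x)) = f (f x) := by rw [h]
      rw [hff _ hgx, hff _ hx] at h2
      exact d2 h2
    have d6 : f (g x) ≠ g x := hf1 _ hgx
    rw [Finset.card_insert_of_notMem (by simp only [Finset.mem_insert, Finset.mem_singleton, not_or]; exact ⟨Ne.symm d1, Ne.symm d2, Ne.symm d3⟩),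
        Finset.card_insert_of_notMem (by simp only [Finset.mem_insert, Finset.mem_singleton, not_or]; exact ⟨Ne.symm d4, Ne.symm d5⟩),
        Finset.card_insert_of_notMem (by simp only [Finset.mem_singleton]; exact Ne.symm d6), Finset.card_singleton]
  · intro x hx y hy
    have e1 := hff x hx
    have e2 := hgg x hx
    have e4 : f (f (g x)) = g x := hff _ (hg x hx)
    have e5 : g (f x) = f (g x) := (hcomm x hx).symm
    have e7 : g (f (g x)) = f (g (g x)) := (hcomm _ (hg x hx)).symm
    simp only [Finset.mem_insert, Finset.mem_singleton] at hy
    rcases hy with rfl | rfl | rfl | rfl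
    · rfl
    · ext z; simp only [Finset.mem_insert, Finset.mem_singleton]; rw [e1, e5, e4]; tauto
    · ext z; simp only [Finset.mem_insert, Finset.mem_singleton]; rw [e2]; tauto
    · ext z; simp only [Finset.mem_insert, Finset.mem_singleton]; rw [e4, e7, e2, e1]; tauto

-- ### basics

def rp (n : ℕ) (p : ℕ × ℕ) : ℕ × ℕ := (n + 1 - p.2, p.1)

def orb (n : ℕ) (p : ℕ × ℕ) : Finset (ℕ × ℕ) := {p, rp n p, rp n (rp n p), rp n (rp n (rp n p))}

lemma mem_board {n : ℕ} {p : ℕ × ℕ} :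
    p ∈ board n ↔ 1 ≤ p.1 ∧ p.1 ≤ n ∧ 1 ≤ p.2 ∧ p.2 ≤ n := by
  simp [board, Finset.mem_product, Finset.mem_Icc]; tauto

lemma rp_mem_board {n : ℕ} {p : ℕ × ℕ} (hp : p ∈ board n) : rp n p ∈ board n := by
  rw [mem_board] at *
  simp only [rp]
  omega

lemma rp2_eq (n : ℕ) (p : ℕ × ℕ) :
    rp n (rp n p) = (n + 1 - p.1, n + 1 - p.2) := rfl

lemma rp4_eq {n : ℕ} {p : ℕ × ℕ} (hp : p ∈ board n) :
    rp n (rp n (rp n (rp n p))) = p := by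
  rw [mem_board] at hp
  simp only [rp, Prod.ext_iff]
  omega

lemma rp_inj {n : ℕ} {p q : ℕ × ℕ} (hp : p ∈ board n) (hq : q ∈ board n)
    (h : rp n p = rp n q) : p = q := by
  rw [mem_board] at hp hq
  simp only [rp, Prod.ext_iff] at h ⊢
  omega

lemma rAct_img (n : ℕ) (Q : Finset (ℕ × ℕ)) : rAct n Q = Q.image (rp n) := rfl

lemma mem_rAct_of_mem {n : ℕ} {Q : Finset (ℕ × ℕ)} {p : ℕ × ℕ} (hp : p ∈ Q) :
    rp n p ∈ rAct n Q := Finset.mem_image_of_mem _ hp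

lemma orb_subset_board {n : ℕ} {p : ℕ × ℕ} (hp : p ∈ board n) : orb n p ⊆ board n := by
  intro z hz
  simp only [orb, Finset.mem_insert, Finset.mem_singleton] at hz
  rcases hz with rfl | rfl | rfl | rfl
  · exact hp
  · exact rp_mem_board hp
  · exact rp_mem_board (rp_mem_board hp)
  · exact rp_mem_board (rp_mem_board (rp_mem_board hp))

lemma mem_orb_self {n : ℕ} (p : ℕ × ℕ) : p ∈ orb n p := by simp [orb]

lemma rp_mem_orb {n : ℕ} {p z : ℕ × ℕ} (hp : p ∈ board n) (hz : z ∈ orb n p) :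
    rp n z ∈ orb n p := by
  simp only [orb, Finset.mem_insert, Finset.mem_singleton] at hz ⊢
  rcases hz with rfl | rfl | rfl | rfl
  · tauto
  · tauto
  · tauto
  · left; exact rp4_eq hp

lemma orb_eq_of_mem {n : ℕ} {p z : ℕ × ℕ} (hp : p ∈ board n) (hz : z ∈ orb n p) :
    orb n z = orb n p := by
  have h4 := rp4_eq hp
  simp only [orb, Finset.mem_insert, Finset.mem_singleton] at hz
  rcases hz with rfl | rfl | rfl | rfl
  · rfl
  · ext w; simp only [orb, Finset.mem_insert, Finset.mem_singleton]; rw [h4]; tauto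
  · ext w; simp only [orb, Finset.mem_insert, Finset.mem_singleton]; rw [h4]; tauto
  · ext w; simp only [orb, Finset.mem_insert, Finset.mem_singleton]; rw [h4]; tauto

lemma orb_disjoint {n : ℕ} {p q : ℕ × ℕ} (hp : p ∈ board n) (hq : q ∈ board n)
    (h : orb n p ≠ orb n q) : ∀ z, z ∈ orb n p → z ∈ orb n q → False := by
  intro z h1 h2
  exact h ((orb_eq_of_mem hp h1).symm.trans (orb_eq_of_mem hq h2))

lemma orb_cells {n : ℕ} {i j : ℕ} (h1 : 1 ≤ i) (h2 : i ≤ n) (h3 : 1 ≤ j) (h4 : j ≤ n) :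
    orb n (i, j) = {(i, j), (n + 1 - j, i), (n + 1 - i, n + 1 - j), (j, n + 1 - i)} := by
  have e1 : rp n (i, j) = (n + 1 - j, i) := rfl
  have e2 : rp n (n + 1 - j, i) = (n + 1 - i, n + 1 - j) := rfl
  have e3 : rp n (n + 1 - i, n + 1 - j) = (j, n + 1 - i) := by
    simp [rp, Prod.ext_iff]; omega
  simp only [orb, e1, e2, e3]

lemma rAct_orb {n : ℕ} {p : ℕ × ℕ} (hp : p ∈ board n) : rAct n (orb n p) = orb n p := by
  have h4 := rp4_eq hp
  rw [rAct_img]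
  ext w
  simp only [Finset.mem_image, orb, Finset.mem_insert, Finset.mem_singleton]
  constructor
  · rintro ⟨z, hz, rfl⟩
    rcases hz with rfl | rfl | rfl | rfl <;> tauto
  · rintro (rfl | rfl | rfl | rfl)
    · exact ⟨_, by tauto, h4⟩
    · exact ⟨p, by tauto, rfl⟩
    · exact ⟨rp n p, by tauto, rfl⟩
    · exact ⟨rp n (rp n p), by tauto, rfl⟩

-- ### config basics

namespace QC

variable {n : ℕ} {Q : Finset (ℕ × ℕ)}

lemma bd (h : IsQueensConfig n Q) {p : ℕ × ℕ} (hp : p ∈ Q) :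
    1 ≤ p.1 ∧ p.1 ≤ n ∧ 1 ≤ p.2 ∧ p.2 ≤ n := mem_board.mp (h.1 hp)

lemma row (h : IsQueensConfig n Q) {p q : ℕ × ℕ} (hp : p ∈ Q) (hq : q ∈ Q)
    (e : p.1 = q.1) : p = q := h.2.2.1 p hp q hq e

lemma col (h : IsQueensConfig n Q) {p q : ℕ × ℕ} (hp : p ∈ Q) (hq : q ∈ Q)
    (e : p.2 = q.2) : p = q := h.2.2.2.1 p hp q hq e

lemma diag (h : IsQueensConfig n Q) {p q : ℕ × ℕ} (hp : p ∈ Q) (hq : q ∈ Q)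
    (e : p.2 + n - p.1 = q.2 + n - q.1) : p = q := h.2.2.2.2.1 p hp q hq e

lemma anti (h : IsQueensConfig n Q) {p q : ℕ × ℕ} (hp : p ∈ Q) (hq : q ∈ Q)
    (e : p.1 + p.2 - 1 = q.1 + q.2 - 1) : p = q := h.2.2.2.2.2 p hp q hq e

lemma rp_mem (h : rAct n Q = Q) {p : ℕ × ℕ} (hp : p ∈ Q) : rp n p ∈ Q := by
  rw [← h]; exact mem_rAct_of_mem hp

lemma orb_subset (h : IsQueensConfig n Q) (hr : rAct n Q = Q) {p : ℕ × ℕ} (hp : p ∈ Q) :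
    orb n p ⊆ Q := by
  intro z hz
  simp only [orb, Finset.mem_insert, Finset.mem_singleton] at hz
  rcases hz with rfl | rfl | rfl | rfl
  · exact hp
  · exact rp_mem hr hp
  · exact rp_mem hr (rp_mem hr hp)
  · exact rp_mem hr (rp_mem hr (rp_mem hr hp))

lemma row_exists (h : IsQueensConfig n Q) {i : ℕ} (h1 : 1 ≤ i) (h2 : i ≤ n) :
    ∃ p ∈ Q, p.1 = i := by
  have hinj : Set.InjOn Prod.fst ↑Q := fun p hp q hq e => row h hp hq e
  have himg : Q.image Prod.fst ⊆ Finset.Icc 1 n := by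
    intro z hz
    obtain ⟨p, hp, rfl⟩ := Finset.mem_image.mp hz
    have := bd h hp
    rw [Finset.mem_Icc]
    omega
  have hcard : (Q.image Prod.fst).card = (Finset.Icc 1 n).card := by
    rw [Finset.card_image_of_injOn hinj, h.2.1, Nat.card_Icc]; omega
  have heq : Q.image Prod.fst = Finset.Icc 1 n :=
    Finset.eq_of_subset_of_card_le himg (le_of_eq hcard.symm)
  have : i ∈ Q.image Prod.fst := heq ▸ (Finset.mem_Icc.mpr ⟨h1, h2⟩)
  obtain ⟨p, hp, hpe⟩ := Finset.mem_image.mp this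
  exact ⟨p, hp, hpe⟩

end QC

noncomputable def qcol (Q : Finset (ℕ × ℕ)) (i : ℕ) : ℕ :=
  (Q.filter (fun p => p.1 = i)).sup Prod.snd

lemma qcol_eq {n : ℕ} {Q : Finset (ℕ × ℕ)} (h : IsQueensConfig n Q) {p : ℕ × ℕ}
    (hp : p ∈ Q) : qcol Q p.1 = p.2 := by
  have : Q.filter (fun q => q.1 = p.1) = {p} := by
    ext z
    simp only [Finset.mem_filter, Finset.mem_singleton]
    constructor
    · rintro ⟨hz, he⟩; exact QC.row h hz hp he
    · rintro rfl; exact ⟨hp, rfl⟩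
  rw [qcol, this, Finset.sup_singleton]

lemma queen_exists {n : ℕ} {Q : Finset (ℕ × ℕ)} (h : IsQueensConfig n Q) {i : ℕ}
    (h1 : 1 ≤ i) (h2 : i ≤ n) : (i, qcol Q i) ∈ Q := by
  obtain ⟨p, hp, rfl⟩ := QC.row_exists h h1 h2
  rw [qcol_eq h hp]
  exact hp

-- ### symmetry preservation

def sp (n : ℕ) (p : ℕ × ℕ) : ℕ × ℕ := (p.1, n + 1 - p.2)

lemma sAct_img (n : ℕ) (Q : Finset (ℕ × ℕ)) : sAct n Q = Q.image (sp n) := rfl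

lemma sp_mem_board {n : ℕ} {p : ℕ × ℕ} (hp : p ∈ board n) : sp n p ∈ board n := by
  rw [mem_board] at *; simp only [sp]; omega

lemma rAct_subset_board {n : ℕ} {Q : Finset (ℕ × ℕ)} (h : Q ⊆ board n) :
    rAct n Q ⊆ board n := by
  intro z hz
  obtain ⟨p, hp, rfl⟩ := Finset.mem_image.mp hz
  exact rp_mem_board (h hp)

lemma sAct_subset_board {n : ℕ} {Q : Finset (ℕ × ℕ)} (h : Q ⊆ board n) :
    sAct n Q ⊆ board n := by
  intro z hz
  obtain ⟨p, hp, rfl⟩ := Finset.mem_image.mp hz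
  exact sp_mem_board (h hp)

lemma ract_config {n : ℕ} {Q : Finset (ℕ × ℕ)} (h : IsQueensConfig n Q) :
    IsQueensConfig n (rAct n Q) := by
  obtain ⟨hb, hc, hrow, hcol, hdiag, hanti⟩ := h
  have hB : ∀ p ∈ Q, 1 ≤ p.1 ∧ p.1 ≤ n ∧ 1 ≤ p.2 ∧ p.2 ≤ n := fun p hp => mem_board.mp (hb hp)
  refine ⟨rAct_subset_board hb, ?_, ?_, ?_, ?_, ?_⟩
  · rw [rAct_img, Finset.card_image_of_injOn (fun p hp q hq e => rp_inj (hb hp) (hb hq) e), hc]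
  all_goals
    rintro p' hp' q' hq'
    obtain ⟨p, hp, rfl⟩ := Finset.mem_image.mp hp'
    obtain ⟨q, hq, rfl⟩ := Finset.mem_image.mp hq'
    intro e
    have Bp := hB p hp
    have Bq := hB q hq
    simp only at e
  · -- rows of image = columns
    have : p.2 = q.2 := by omega
    rw [hcol p hp q hq this]
  · have : p.1 = q.1 := by omega
    rw [hrow p hp q hq this]
  · have : p.1 + p.2 - 1 = q.1 + q.2 - 1 := by omega
    rw [hanti p hp q hq this]
  · have : p.2 + n - p.1 = q.2 + n - q.1 := by omega
    rw [hdiag p hp q hq this]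

lemma sact_config {n : ℕ} {Q : Finset (ℕ × ℕ)} (h : IsQueensConfig n Q) :
    IsQueensConfig n (sAct n Q) := by
  obtain ⟨hb, hc, hrow, hcol, hdiag, hanti⟩ := h
  have hB : ∀ p ∈ Q, 1 ≤ p.1 ∧ p.1 ≤ n ∧ 1 ≤ p.2 ∧ p.2 ≤ n := fun p hp => mem_board.mp (hb hp)
  have hinj : ∀ p ∈ Q, ∀ q ∈ Q, sp n p = sp n q → p = q := by
    intro p hp q hq e
    have := hB p hp; have := hB q hq
    simp only [sp, Prod.ext_iff] at e ⊢
    omega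
  refine ⟨sAct_subset_board hb, ?_, ?_, ?_, ?_, ?_⟩
  · rw [sAct_img, Finset.card_image_of_injOn (fun p hp q hq e => hinj p hp q hq e), hc]
  all_goals
    rintro p' hp' q' hq'
    obtain ⟨p, hp, rfl⟩ := Finset.mem_image.mp hp'
    obtain ⟨q, hq, rfl⟩ := Finset.mem_image.mp hq'
    intro e
    have Bp := hB p hp
    have Bq := hB q hq
    simp only at e
  · have : p.1 = q.1 := by omega
    rw [hrow p hp q hq this]
  · have : p.2 = q.2 := by omega
    rw [hcol p hp q hq this]
  · have : p.1 + p.2 - 1 = q.1 + q.2 - 1 := by omega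
    rw [hanti p hp q hq this]
  · have : p.2 + n - p.1 = q.2 + n - q.1 := by omega
    rw [hdiag p hp q hq this]

-- ### composition identities

def tp (p : ℕ × ℕ) : ℕ × ℕ := (p.2, p.1)

lemma ract_ract {n : ℕ} (Q : Finset (ℕ × ℕ)) :
    rAct n (rAct n Q) = Q.image (fun p => rp n (rp n p)) := by
  rw [rAct_img, rAct_img, Finset.image_image]; rfl

lemma ract4 {n : ℕ} {Q : Finset (ℕ × ℕ)} (h : Q ⊆ board n) :
    rAct n (rAct n (rAct n (rAct n Q))) = Q := by
  rw [rAct_img, rAct_img, rAct_img, rAct_img, Finset.image_image, Finset.image_image,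
    Finset.image_image]
  have : Finset.image (((rp n ∘ rp n) ∘ rp n) ∘ rp n) Q = Finset.image id Q :=
    Finset.image_congr (fun p hp => by simpa [Function.comp] using rp4_eq (h hp))
  rw [this, Finset.image_id]

lemma ract_cancel {n : ℕ} {A B : Finset (ℕ × ℕ)} (hA : A ⊆ board n) (hB : B ⊆ board n)
    (h : rAct n A = rAct n B) : A = B := by
  ext z
  constructor
  · intro hz
    have : rp n z ∈ rAct n B := h ▸ mem_rAct_of_mem hz
    obtain ⟨w, hw, he⟩ := Finset.mem_image.mp this
    rwa [rp_inj (hB hw) (hA hz) he] at hw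
  · intro hz
    have : rp n z ∈ rAct n A := h.symm ▸ mem_rAct_of_mem hz
    obtain ⟨w, hw, he⟩ := Finset.mem_image.mp this
    rwa [rp_inj (hA hw) (hB hz) he] at hw

lemma sact_sact {n : ℕ} {Q : Finset (ℕ × ℕ)} (h : Q ⊆ board n) :
    sAct n (sAct n Q) = Q := by
  rw [sAct_img, sAct_img, Finset.image_image]
  have : Finset.image (sp n ∘ sp n) Q = Finset.image id Q :=
    Finset.image_congr (fun p hp => by
      have := mem_board.mp (h hp)
      simp [Function.comp, sp, Prod.ext_iff] <;> omega)
  rw [this, Finset.image_id]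

lemma sact_cancel {n : ℕ} {A B : Finset (ℕ × ℕ)} (hA : A ⊆ board n) (hB : B ⊆ board n)
    (h : sAct n A = sAct n B) : A = B := by
  have := congrArg (sAct n) h
  rwa [sact_sact hA, sact_sact hB] at this

-- r² commutes with s on board subsets
lemma rr_s_comm {n : ℕ} {Q : Finset (ℕ × ℕ)} (h : Q ⊆ board n) :
    rAct n (rAct n (sAct n Q)) = sAct n (rAct n (rAct n Q)) := by
  rw [ract_ract, sAct_img, sAct_img, ract_ract, Finset.image_image, Finset.image_image]
  apply Finset.image_congr
  intro p hp
  have := mem_board.mp (h hp)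
  simp [Function.comp, sp, rp, Prod.ext_iff] <;> omega

-- r ∘ s = transpose on board subsets
lemma r_s_eq_tp {n : ℕ} {Q : Finset (ℕ × ℕ)} (h : Q ⊆ board n) :
    rAct n (sAct n Q) = Q.image tp := by
  rw [sAct_img, rAct_img, Finset.image_image]
  apply Finset.image_congr
  intro p hp
  have := mem_board.mp (h hp)
  simp [Function.comp, sp, rp, tp, Prod.ext_iff] <;> omega

-- if r²Q = Q then r(sQ) = s(rQ)
lemma rs_comm {n : ℕ} {Q : Finset (ℕ × ℕ)} (h : Q ⊆ board n)
    (h2 : rAct n (rAct n Q) = Q) : rAct n (sAct n Q) = sAct n (rAct n Q) := by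
  conv_rhs => rw [← h2]
  rw [sAct_img, rAct_img, rAct_img, rAct_img, rAct_img, sAct_img,
    Finset.image_image, Finset.image_image, Finset.image_image, Finset.image_image]
  apply Finset.image_congr
  intro p hp
  have := mem_board.mp (h hp)
  simp [Function.comp, sp, rp, Prod.ext_iff] <;> omega

-- ### fixed-point freeness

lemma card_two_exists {n : ℕ} {Q : Finset (ℕ × ℕ)} (h : IsQueensConfig n Q) (hn : 2 ≤ n) :
    ∃ p ∈ Q, ∃ q ∈ Q, p ≠ q := by
  have : 1 < Q.card := by rw [h.2.1]; omega
  obtain ⟨p, hp, q, hq, hne⟩ := Finset.one_lt_card.mp this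
  exact ⟨p, hp, q, hq, hne⟩

lemma sact_free {n : ℕ} {Q : Finset (ℕ × ℕ)} (h : IsQueensConfig n Q) (hn : 2 ≤ n) :
    sAct n Q ≠ Q := by
  intro he
  have key : ∀ p ∈ Q, 2 * p.2 = n + 1 := by
    intro p hp
    have hsp : sp n p ∈ Q := by
      rw [← he]; exact Finset.mem_image_of_mem _ hp
    have hb := QC.bd h hp
    have : p = sp n p := QC.row h hp hsp rfl
    simp only [sp, Prod.ext_iff] at this
    omega
  obtain ⟨p, hp, q, hq, hne⟩ := card_two_exists h hn
  have := key p hp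
  have := key q hq
  exact hne (QC.col h hp hq (by omega))

lemma tp_free {n : ℕ} {Q : Finset (ℕ × ℕ)} (h : IsQueensConfig n Q) (hn : 2 ≤ n) :
    Q.image tp ≠ Q := by
  intro he
  have key : ∀ p ∈ Q, p.1 = p.2 := by
    intro p hp
    have htp : tp p ∈ Q := by
      rw [← he]; exact Finset.mem_image_of_mem _ hp
    have hb := QC.bd h hp
    have : p = tp p := QC.anti h hp htp (by simp [tp]; omega)
    simp [tp, Prod.ext_iff] at this
    omega
  obtain ⟨p, hp, q, hq, hne⟩ := card_two_exists h hn
  have h1 := key p hp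
  have h2 := key q hq
  have hb1 := QC.bd h hp
  have hb2 := QC.bd h hq
  exact hne (QC.diag h hp hq (by omega))

-- ### the configuration sets

noncomputable def Sset (n : ℕ) : Finset (Finset (ℕ × ℕ)) :=
  (board n).powerset.filter (fun Q => IsQueensConfig n Q)

lemma mem_Sset {n : ℕ} {Q : Finset (ℕ × ℕ)} : Q ∈ Sset n ↔ IsQueensConfig n Q := by
  simp only [Sset, Finset.mem_filter, Finset.mem_powerset]
  exact ⟨fun h => h.2, fun h => ⟨h.1, h⟩⟩

lemma four_dvd_S4 {n : ℕ} (hn : 2 ≤ n) :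
    4 ∣ ((Sset n).filter (fun Q => rAct n (rAct n Q) ≠ Q)).card := by
  apply four_dvd_cycle _ (rAct n)
  · intro Q hQ
    rw [Finset.mem_filter, mem_Sset] at hQ ⊢
    obtain ⟨hQ, hne⟩ := hQ
    refine ⟨ract_config hQ, fun he => hne ?_⟩
    exact ract_cancel (rAct_subset_board (rAct_subset_board hQ.1)) hQ.1 he
  · intro Q hQ
    rw [Finset.mem_filter, mem_Sset] at hQ
    exact ract4 hQ.1.1
  · intro Q hQ
    rw [Finset.mem_filter, mem_Sset] at hQ
    intro he
    exact hQ.2 (by rw [he, he])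
  · intro Q hQ
    rw [Finset.mem_filter, mem_Sset] at hQ
    exact hQ.2

lemma four_dvd_S2 {n : ℕ} (hn : 2 ≤ n) :
    4 ∣ ((Sset n).filter (fun Q => rAct n (rAct n Q) = Q ∧ rAct n Q ≠ Q)).card := by
  apply four_dvd_klein _ (rAct n) (sAct n)
  · -- f maps
    intro Q hQ
    rw [Finset.mem_filter, mem_Sset] at hQ ⊢
    obtain ⟨hQ, h2, h1⟩ := hQ
    refine ⟨ract_config hQ, ?_, ?_⟩
    · exact congrArg (rAct n) h2
    · rw [h2]; exact fun he => h1 he.symm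
  · -- g maps
    intro Q hQ
    rw [Finset.mem_filter, mem_Sset] at hQ ⊢
    obtain ⟨hQ, h2, h1⟩ := hQ
    have hb := hQ.1
    refine ⟨sact_config hQ, ?_, ?_⟩
    · rw [rs_comm hb h2, rs_comm (rAct_subset_board hb) (congrArg (rAct n) h2), h2]
    · rw [rs_comm hb h2]
      intro he
      exact h1 (sact_cancel (rAct_subset_board hb) hb he)
  · -- f ∘ f = id
    intro Q hQ
    rw [Finset.mem_filter, mem_Sset] at hQ
    exact hQ.2.1
  · -- g ∘ g = id
    intro Q hQ
    rw [Finset.mem_filter, mem_Sset] at hQ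
    exact sact_sact hQ.1.1
  · -- comm
    intro Q hQ
    rw [Finset.mem_filter, mem_Sset] at hQ
    exact rs_comm hQ.1.1 hQ.2.1
  · -- rQ ≠ Q
    intro Q hQ
    rw [Finset.mem_filter, mem_Sset] at hQ
    exact hQ.2.2
  · -- sQ ≠ Q
    intro Q hQ
    rw [Finset.mem_filter, mem_Sset] at hQ
    exact sact_free hQ.1 hn
  · -- r (s Q) ≠ Q
    intro Q hQ
    rw [Finset.mem_filter, mem_Sset] at hQ
    rw [r_s_eq_tp hQ.1.1]
    exact tp_free hQ.1 hn

-- ### counting within a rotation-symmetric configuration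

lemma rp_fix {n : ℕ} {p : ℕ × ℕ} (hb : p ∈ board n) (h : rp n p = p) :
    p.1 = p.2 ∧ 2 * p.1 = n + 1 := by
  rw [mem_board] at hb
  simp only [rp, Prod.ext_iff] at h
  omega

lemma four_dvd_nonfixed {n : ℕ} {Q : Finset (ℕ × ℕ)} (h : IsQueensConfig n Q)
    (hr : rAct n Q = Q) : 4 ∣ (Q.filter (fun p => rp n p ≠ p)).card := by
  apply four_dvd_cycle _ (rp n)
  · intro p hp
    rw [Finset.mem_filter] at hp ⊢
    obtain ⟨hp, hne⟩ := hp
    refine ⟨QC.rp_mem hr hp, fun he => hne ?_⟩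
    exact rp_inj (h.1 (QC.rp_mem hr hp)) (h.1 hp) he
  · intro p hp
    rw [Finset.mem_filter] at hp
    exact rp4_eq (h.1 hp.1)
  · intro p hp
    rw [Finset.mem_filter] at hp
    exact hp.2
  · intro p hp
    rw [Finset.mem_filter] at hp
    intro he
    have hb := QC.bd h hp.1
    simp only [rp, Prod.ext_iff] at he
    apply hp.2
    simp only [rp, Prod.ext_iff]
    omega

lemma card_fixed_le_one {n : ℕ} {Q : Finset (ℕ × ℕ)} (h : IsQueensConfig n Q) :
    (Q.filter (fun p => rp n p = p)).card ≤ 1 := by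
  apply Finset.card_le_one.mpr
  intro p hp q hq
  rw [Finset.mem_filter] at hp hq
  have h1 := rp_fix (h.1 hp.1) hp.2
  have h2 := rp_fix (h.1 hq.1) hq.2
  exact QC.row h hp.1 hq.1 (by omega)

lemma mod4_of_sym {n : ℕ} {Q : Finset (ℕ × ℕ)} (h : IsQueensConfig n Q)
    (hr : rAct n Q = Q) : n % 4 = 0 ∨ n % 4 = 1 := by
  have hsplit := Finset.card_filter_add_card_filter_not
    (s := Q) (p := fun p => rp n p = p)
  have h1 := card_fixed_le_one h
  have h2 := four_dvd_nonfixed h hr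
  have : (Q.filter (fun p => ¬ rp n p = p)).card = (Q.filter (fun p => rp n p ≠ p)).card := rfl
  rw [h.2.1] at hsplit
  omega

lemma center_mem {n : ℕ} {Q : Finset (ℕ × ℕ)} (h : IsQueensConfig n Q)
    (hr : rAct n Q = Q) {k : ℕ} (hk : 2 * k = n + 1) (hm : n % 4 = 1) : (k, k) ∈ Q := by
  by_contra hc
  have hempty : Q.filter (fun p => rp n p = p) = ∅ := by
    rw [Finset.filter_eq_empty_iff]
    intro p hp he
    have := rp_fix (h.1 hp) he
    have hb := QC.bd h hp
    have : p = (k, k) := by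
      rw [Prod.ext_iff]
      constructor <;> omega
    exact hc (this ▸ hp)
  have hsplit := Finset.card_filter_add_card_filter_not
    (s := Q) (p := fun p => rp n p = p)
  have h2 := four_dvd_nonfixed h hr
  have : (Q.filter (fun p => ¬ rp n p = p)).card = (Q.filter (fun p => rp n p ≠ p)).card := rfl
  rw [h.2.1, hempty] at hsplit
  simp at hsplit
  omega

-- ### the orbit flip

def fcond (n i j : ℕ) : Prop :=
  1 ≤ i ∧ i ≤ n ∧ 1 ≤ j ∧ j ≤ n ∧ i ≠ j ∧ i + j ≠ n + 1 ∧ 2*i ≠ n+1 ∧ 2*j ≠ n+1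

lemma fcond_swap {n i j : ℕ} (h : fcond n i j) : fcond n j i := by
  obtain ⟨h1, h2, h3, h4, h5, h6, h7, h8⟩ := h
  exact ⟨h3, h4, h1, h2, fun e => h5 e.symm, by omega, h8, h7⟩

lemma orb_card {n i j : ℕ} (hc : fcond n i j) : (orb n (i, j)).card = 4 := by
  obtain ⟨h1, h2, h3, h4, h5, h6, h7, h8⟩ := hc
  rw [orb_cells h1 h2 h3 h4]
  rw [Finset.card_insert_of_notMem (by
      simp only [Finset.mem_insert, Finset.mem_singleton, Prod.mk.injEq]; omega),
    Finset.card_insert_of_notMem (by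
      simp only [Finset.mem_insert, Finset.mem_singleton, Prod.mk.injEq]; omega),
    Finset.card_insert_of_notMem (by
      simp only [Finset.mem_singleton, Prod.mk.injEq]; omega),
    Finset.card_singleton]

lemma orb_swap_ne {n i j : ℕ} (hc : fcond n i j) : orb n (j, i) ≠ orb n (i, j) := by
  obtain ⟨h1, h2, h3, h4, h5, h6, h7, h8⟩ := hc
  intro he
  have : (j, i) ∈ orb n (i, j) := he ▸ mem_orb_self _
  rw [orb_cells h1 h2 h3 h4] at this
  simp only [Finset.mem_insert, Finset.mem_singleton, Prod.mk.injEq] at this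
  omega

theorem flip_spec {n : ℕ} {Q : Finset (ℕ × ℕ)} (h : IsQueensConfig n Q) (hr : rAct n Q = Q)
    {i j : ℕ} (hm : (i, j) ∈ Q) (hc : fcond n i j) :
    IsQueensConfig n ((Q \ orb n (i, j)) ∪ orb n (j, i)) ∧
    rAct n ((Q \ orb n (i, j)) ∪ orb n (j, i)) = (Q \ orb n (i, j)) ∪ orb n (j, i) ∧
    (∀ z ∈ orb n (j, i), z ∉ Q) := by
  obtain ⟨g1, g2, g3, g4, g5, g6, g7, g8⟩ := hc
  have hb1 : (i, j) ∈ board n := mem_board.mpr ⟨g1, g2, g3, g4⟩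
  have hb2 : (j, i) ∈ board n := mem_board.mpr ⟨g3, g4, g1, g2⟩
  have hcells := orb_cells (n := n) g1 g2 g3 g4
  have hcells' := orb_cells (n := n) g3 g4 g1 g2
  have hOQ : orb n (i, j) ⊆ Q := QC.orb_subset h hr hm
  -- covering lemmas
  have covRow : ∀ z ∈ orb n (j, i), ∃ w ∈ orb n (i, j), w.1 = z.1 := by
    intro z hz
    rw [hcells'] at hz
    simp only [Finset.mem_insert, Finset.mem_singleton] at hz
    rcases hz with rfl | rfl | rfl | rfl
    · exact ⟨(j, n+1-i), by rw [hcells]; simp, rfl⟩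
    · exact ⟨(n+1-i, n+1-j), by rw [hcells]; simp, rfl⟩
    · exact ⟨(n+1-j, i), by rw [hcells]; simp, rfl⟩
    · exact ⟨(i, j), by rw [hcells]; simp, rfl⟩
  have covCol : ∀ z ∈ orb n (j, i), ∃ w ∈ orb n (i, j), w.2 = z.2 := by
    intro z hz
    rw [hcells'] at hz
    simp only [Finset.mem_insert, Finset.mem_singleton] at hz
    rcases hz with rfl | rfl | rfl | rfl
    · exact ⟨(n+1-j, i), by rw [hcells]; simp, rfl⟩
    · exact ⟨(i, j), by rw [hcells]; simp, rfl⟩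
    · exact ⟨(j, n+1-i), by rw [hcells]; simp, rfl⟩
    · exact ⟨(n+1-i, n+1-j), by rw [hcells]; simp, rfl⟩
  have covDiag : ∀ z ∈ orb n (j, i), ∃ w ∈ orb n (i, j), w.2 + n - w.1 = z.2 + n - z.1 := by
    intro z hz
    rw [hcells'] at hz
    simp only [Finset.mem_insert, Finset.mem_singleton] at hz
    rcases hz with rfl | rfl | rfl | rfl
    · exact ⟨(n+1-i, n+1-j), by rw [hcells]; simp, by simp <;> omega⟩
    · exact ⟨(n+1-j, i), by rw [hcells]; simp, by simp <;> omega⟩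
    · exact ⟨(i, j), by rw [hcells]; simp, by simp <;> omega⟩
    · exact ⟨(j, n+1-i), by rw [hcells]; simp, by simp <;> omega⟩
  have covAnti : ∀ z ∈ orb n (j, i), ∃ w ∈ orb n (i, j), w.1 + w.2 - 1 = z.1 + z.2 - 1 := by
    intro z hz
    rw [hcells'] at hz
    simp only [Finset.mem_insert, Finset.mem_singleton] at hz
    rcases hz with rfl | rfl | rfl | rfl
    · exact ⟨(i, j), by rw [hcells]; simp, by simp <;> omega⟩
    · exact ⟨(j, n+1-i), by rw [hcells]; simp, by simp <;> omega⟩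
    · exact ⟨(n+1-i, n+1-j), by rw [hcells]; simp, by simp <;> omega⟩
    · exact ⟨(n+1-j, i), by rw [hcells]; simp, by simp <;> omega⟩
  -- new orbit is disjoint from Q
  have hnotin : ∀ z ∈ orb n (j, i), z ∉ Q := by
    intro z hz hzQ
    obtain ⟨w, hw, hwe⟩ := covRow z hz
    have : w = z := QC.row h (hOQ hw) hzQ hwe
    subst this
    exact orb_disjoint hb1 hb2 (orb_swap_ne ⟨g1, g2, g3, g4, g5, g6, g7, g8⟩).symm w hw hz
  have hdisj : Disjoint (Q \ orb n (i, j)) (orb n (j, i)) := by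
    rw [Finset.disjoint_right]
    intro z hz hz2
    exact hnotin z hz (Finset.mem_sdiff.mp hz2).1
  -- injectivity of each line on the new orbit
  have injRow : ∀ z₁ ∈ orb n (j, i), ∀ z₂ ∈ orb n (j, i), z₁.1 = z₂.1 → z₁ = z₂ := by
    intro z₁ h₁ z₂ h₂ e
    rw [hcells'] at h₁ h₂
    simp only [Finset.mem_insert, Finset.mem_singleton] at h₁ h₂
    rcases h₁ with rfl | rfl | rfl | rfl <;> rcases h₂ with rfl | rfl | rfl | rfl <;>
      simp only [Prod.mk.injEq] at e ⊢ <;> omega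
  have injCol : ∀ z₁ ∈ orb n (j, i), ∀ z₂ ∈ orb n (j, i), z₁.2 = z₂.2 → z₁ = z₂ := by
    intro z₁ h₁ z₂ h₂ e
    rw [hcells'] at h₁ h₂
    simp only [Finset.mem_insert, Finset.mem_singleton] at h₁ h₂
    rcases h₁ with rfl | rfl | rfl | rfl <;> rcases h₂ with rfl | rfl | rfl | rfl <;>
      simp only [Prod.mk.injEq] at e ⊢ <;> omega
  have injDiag : ∀ z₁ ∈ orb n (j, i), ∀ z₂ ∈ orb n (j, i),
      z₁.2 + n - z₁.1 = z₂.2 + n - z₂.1 → z₁ = z₂ := by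
    intro z₁ h₁ z₂ h₂ e
    rw [hcells'] at h₁ h₂
    simp only [Finset.mem_insert, Finset.mem_singleton] at h₁ h₂
    rcases h₁ with rfl | rfl | rfl | rfl <;> rcases h₂ with rfl | rfl | rfl | rfl <;>
      simp only [Prod.mk.injEq] at e ⊢ <;> omega
  have injAnti : ∀ z₁ ∈ orb n (j, i), ∀ z₂ ∈ orb n (j, i),
      z₁.1 + z₁.2 - 1 = z₂.1 + z₂.2 - 1 → z₁ = z₂ := by
    intro z₁ h₁ z₂ h₂ e
    rw [hcells'] at h₁ h₂
    simp only [Finset.mem_insert, Finset.mem_singleton] at h₁ h₂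
    rcases h₁ with rfl | rfl | rfl | rfl <;> rcases h₂ with rfl | rfl | rfl | rfl <;>
      simp only [Prod.mk.injEq] at e ⊢ <;> omega
  -- generic line argument
  have main : ∀ L : ℕ × ℕ → ℕ, (∀ p ∈ Q, ∀ q ∈ Q, L p = L q → p = q) →
      (∀ z ∈ orb n (j, i), ∃ w ∈ orb n (i, j), L w = L z) →
      (∀ z₁ ∈ orb n (j, i), ∀ z₂ ∈ orb n (j, i), L z₁ = L z₂ → z₁ = z₂) →
      ∀ p ∈ (Q \ orb n (i, j)) ∪ orb n (j, i),
      ∀ q ∈ (Q \ orb n (i, j)) ∪ orb n (j, i), L p = L q → p = q := by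
    intro L hQL hcov hinj p hp q hq e
    rw [Finset.mem_union, Finset.mem_sdiff] at hp hq
    rcases hp with ⟨hpQ, hpO⟩ | hpO'
    · rcases hq with ⟨hqQ, hqO⟩ | hqO'
      · exact hQL p hpQ q hqQ e
      · obtain ⟨w, hw, hwe⟩ := hcov q hqO'
        have : p = w := hQL p hpQ w (hOQ hw) (by rw [hwe, e])
        subst this
        exact absurd hw hpO
    · rcases hq with ⟨hqQ, hqO⟩ | hqO'
      · obtain ⟨w, hw, hwe⟩ := hcov p hpO'
        have : q = w := hQL q hqQ w (hOQ hw) (by rw [hwe, e])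
        subst this
        exact absurd hw hqO
      · exact hinj p hpO' q hqO' e
  -- the preserved set facts
  have hQObd : Q \ orb n (i, j) ⊆ board n := fun z hz => h.1 (Finset.mem_sdiff.mp hz).1
  have hO'bd : orb n (j, i) ⊆ board n := orb_subset_board hb2
  have hcard4 : 4 ≤ n := by
    have := Finset.card_le_card hOQ
    rw [h.2.1, orb_card ⟨g1, g2, g3, g4, g5, g6, g7, g8⟩] at this
    exact this
  have hsdcard : (Q \ orb n (i, j)).card = n - 4 := by
    rw [Finset.card_sdiff_of_subset hOQ, h.2.1, orb_card ⟨g1, g2, g3, g4, g5, g6, g7, g8⟩]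
  have hcard : ((Q \ orb n (i, j)) ∪ orb n (j, i)).card = n := by
    rw [Finset.card_union_of_disjoint hdisj, hsdcard,
      orb_card (fcond_swap ⟨g1, g2, g3, g4, g5, g6, g7, g8⟩)]
    omega
  -- r-symmetry of flipped configuration
  have hQOsym : rAct n (Q \ orb n (i, j)) = Q \ orb n (i, j) := by
    ext z
    rw [rAct_img]
    simp only [Finset.mem_image, Finset.mem_sdiff]
    constructor
    · rintro ⟨w, ⟨hwQ, hwO⟩, rfl⟩
      refine ⟨QC.rp_mem hr hwQ, fun hrpO => hwO ?_⟩
      have : rp n w ∈ rAct n (orb n (i, j)) := by rw [rAct_orb hb1]; exact hrpO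
      obtain ⟨o, ho, hoe⟩ := Finset.mem_image.mp this
      rwa [← rp_inj (orb_subset_board hb1 ho) (h.1 hwQ) hoe]
    · rintro ⟨hzQ, hzO⟩
      refine ⟨rp n (rp n (rp n z)), ⟨⟨?_, fun h3 => hzO ?_⟩, rp4_eq (h.1 hzQ)⟩⟩
      · exact QC.rp_mem hr (QC.rp_mem hr (QC.rp_mem hr hzQ))
      · have := rp_mem_orb hb1 h3
        rwa [rp4_eq (h.1 hzQ)] at this
  have hsym : rAct n ((Q \ orb n (i, j)) ∪ orb n (j, i)) =
      (Q \ orb n (i, j)) ∪ orb n (j, i) := by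
    rw [rAct_img, Finset.image_union, ← rAct_img, ← rAct_img, hQOsym, rAct_orb hb2]
  refine ⟨⟨?_, hcard, main _ h.2.2.1 covRow injRow, main _ h.2.2.2.1 covCol injCol,
    main _ h.2.2.2.2.1 covDiag injDiag, main _ h.2.2.2.2.2 covAnti injAnti⟩, hsym, hnotin⟩
  · intro z hz
    rw [Finset.mem_union] at hz
    rcases hz with hz | hz
    · exact hQObd hz
    · exact hO'bd hz

-- ### the two flips

def mrowAux (n c : ℕ) : ℕ :=
  if 2 ≠ c ∧ 2 ≠ n+1-c ∧ 2 ≠ (n+1)/2 then 2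
  else if 3 ≠ c ∧ 3 ≠ n+1-c ∧ 3 ≠ (n+1)/2 then 3
  else if 4 ≠ c ∧ 4 ≠ n+1-c ∧ 4 ≠ (n+1)/2 then 4
  else 5

set_option maxHeartbeats 1000000 in
lemma mrowAux_spec (n c : ℕ) (hc : 1 ≤ c) (hcn : c ≤ n) :
    2 ≤ mrowAux n c ∧ mrowAux n c ≤ 5 ∧ mrowAux n c ≠ c ∧ mrowAux n c ≠ n+1-c ∧
    2 * mrowAux n c ≠ n + 1 := by
  unfold mrowAux
  split_ifs with h1 h2 h3 <;> omega

set_option maxHeartbeats 1000000 in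
lemma mrowAux_symm (n c : ℕ) (hc : 1 ≤ c) (hcn : c ≤ n) :
    mrowAux n (n+1-c) = mrowAux n c := by
  unfold mrowAux
  have e : n+1-(n+1-c) = c := by omega
  rw [e]
  split_ifs <;> tauto

noncomputable def uFlip (n : ℕ) (Q : Finset (ℕ × ℕ)) : Finset (ℕ × ℕ) :=
  (Q \ orb n (1, qcol Q 1)) ∪ orb n (qcol Q 1, 1)

noncomputable def vFlip (n : ℕ) (Q : Finset (ℕ × ℕ)) : Finset (ℕ × ℕ) :=
  (Q \ orb n (mrowAux n (qcol Q 1), qcol Q (mrowAux n (qcol Q 1)))) ∪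
    orb n (qcol Q (mrowAux n (qcol Q 1)), mrowAux n (qcol Q 1))

lemma qcol_pair {n : ℕ} {Q : Finset (ℕ × ℕ)} (h : IsQueensConfig n Q) {a b : ℕ}
    (hz : (a, b) ∈ Q) : qcol Q a = b := qcol_eq h hz

lemma fc_row {n : ℕ} {Q : Finset (ℕ × ℕ)} (h : IsQueensConfig n Q) (hr : rAct n Q = Q)
    (hmod : n % 4 = 0 ∨ n % 4 = 1) {i : ℕ} (h1 : 1 ≤ i) (h2 : i ≤ n) (h3 : 2*i ≠ n+1) :
    fcond n i (qcol Q i) ∧ (i, qcol Q i) ∈ Q := by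
  have hq := queen_exists h h1 h2
  set d := qcol Q i with hd
  have hb := QC.bd h hq
  simp only at hb
  have hid : i ≠ d := by
    intro e
    have h2m := QC.rp_mem hr (QC.rp_mem hr hq)
    rw [rp2_eq] at h2m
    have he : (i, d) = (n + 1 - (i,d).1, n + 1 - (i,d).2) :=
      QC.diag h hq h2m (by simp; omega)
    simp only [Prod.mk.injEq] at he
    omega
  have hsum : i + d ≠ n + 1 := by
    intro e
    have h1m := QC.rp_mem hr hq
    have he : rp n (i, d) = (i, i) := by
      simp [rp, Prod.ext_iff] <;> omega
    rw [he] at h1m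
    have := QC.row h hq h1m rfl
    simp only [Prod.mk.injEq] at this
    omega
  have hd2 : 2*d ≠ n+1 := by
    intro e
    have hodd : n % 4 = 1 := by rcases hmod with hm | hm <;> omega
    have hcen : (d, d) ∈ Q := center_mem h hr e hodd
    have := QC.col h hq hcen rfl
    simp only [Prod.mk.injEq] at this
    omega
  exact ⟨⟨h1, h2, hb.2.2.1, hb.2.2.2, hid, hsum, h3, hd2⟩, hq⟩

set_option maxHeartbeats 1000000 in
lemma master {n : ℕ} {Q : Finset (ℕ × ℕ)} (hn8 : 8 ≤ n) (hmod : n % 4 = 0 ∨ n % 4 = 1)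
    (h : IsQueensConfig n Q) (hr : rAct n Q = Q) :
    (IsQueensConfig n (uFlip n Q) ∧ rAct n (uFlip n Q) = uFlip n Q) ∧
    (IsQueensConfig n (vFlip n Q) ∧ rAct n (vFlip n Q) = vFlip n Q) ∧
    uFlip n (uFlip n Q) = Q ∧ vFlip n (vFlip n Q) = Q ∧
    uFlip n (vFlip n Q) = vFlip n (uFlip n Q) ∧
    uFlip n Q ≠ Q ∧ vFlip n Q ≠ Q ∧ uFlip n (vFlip n Q) ≠ Q := by
  obtain ⟨fc1, hq1⟩ := fc_row h hr hmod (i := 1) (by omega) (by omega) (by omega)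
  set c := qcol Q 1 with hcdef
  obtain ⟨c1, cn⟩ : 1 ≤ c ∧ c ≤ n := ⟨fc1.2.2.1, fc1.2.2.2.1⟩
  obtain ⟨mge, mle, mnec, mnecc, mne2⟩ := mrowAux_spec n c c1 cn
  set m := mrowAux n c with hmdef
  obtain ⟨fc2, hq2⟩ := fc_row h hr hmod (i := m) (by omega) (by omega) mne2
  set d := qcol Q m with hddef
  obtain ⟨d1, dn⟩ : 1 ≤ d ∧ d ≤ n := ⟨fc2.2.2.1, fc2.2.2.2.1⟩
  have hc2 : 2 * c ≠ n + 1 := fc1.2.2.2.2.2.2.2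
  have hd2 : 2 * d ≠ n + 1 := fc2.2.2.2.2.2.2.2
  have hmned : m ≠ d := fc2.2.2.2.2.1
  -- cells
  have cells1 : orb n (1, c) = {(1, c), (n+1-c, 1), (n, n+1-c), (c, n)} := by
    rw [orb_cells (by omega) (by omega) c1 cn]
    norm_num
  have cells1' : orb n (c, 1) = {(c, 1), (n, c), (n+1-c, n), (1, n+1-c)} := by
    rw [orb_cells c1 cn (by omega) (by omega)]
    norm_num
  have cells2 : orb n (m, d) = {(m, d), (n+1-d, m), (n+1-m, n+1-d), (d, n+1-m)} :=
    orb_cells (by omega) (by omega) d1 dn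
  have cells2' : orb n (d, m) = {(d, m), (n+1-m, d), (n+1-d, n+1-m), (m, n+1-d)} :=
    orb_cells d1 dn (by omega) (by omega)
  -- board memberships
  have hb1c : (1, c) ∈ board n := mem_board.mpr (by simp; omega)
  have hbc1 : (c, 1) ∈ board n := mem_board.mpr (by simp; omega)
  have hbmd : (m, d) ∈ board n := mem_board.mpr (by simp; omega)
  have hbdm : (d, m) ∈ board n := mem_board.mpr (by simp; omega)
  -- the two flips per flip_spec
  obtain ⟨hu_conf, hu_sym, hu_notin⟩ := flip_spec h hr hq1 fc1
  obtain ⟨hv_conf, hv_sym, hv_notin⟩ := flip_spec h hr hq2 fc2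
  have huQ : uFlip n Q = (Q \ orb n (1, c)) ∪ orb n (c, 1) := rfl
  have hvQ : vFlip n Q = (Q \ orb n (m, d)) ∪ orb n (d, m) := rfl
  rw [← huQ] at hu_conf hu_sym
  rw [← hvQ] at hv_conf hv_sym
  -- non-membership facts
  have hmd_n1c : (m, d) ∉ orb n (1, c) := by
    rw [cells1]
    simp only [Finset.mem_insert, Finset.mem_singleton, Prod.mk.injEq]
    omega
  have h1c_md : (1, c) ∉ orb n (m, d) := by
    rw [cells2]
    simp only [Finset.mem_insert, Finset.mem_singleton, Prod.mk.injEq]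
    omega
  have hdm_c1 : (d, m) ∉ orb n (c, 1) := by
    rw [cells1']
    simp only [Finset.mem_insert, Finset.mem_singleton, Prod.mk.injEq]
    omega
  have horbne : orb n (m, d) ≠ orb n (1, c) := by
    intro e
    exact hmd_n1c (e ▸ mem_orb_self _)
  have horbne' : orb n (d, m) ≠ orb n (c, 1) := by
    intro e
    exact hdm_c1 (e ▸ mem_orb_self _)
  have dOO : ∀ z, z ∈ orb n (1, c) → z ∈ orb n (m, d) → False :=
    orb_disjoint hb1c hbmd (Ne.symm horbne)
  have dO'O' : ∀ z, z ∈ orb n (c, 1) → z ∈ orb n (d, m) → False :=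
    orb_disjoint hbc1 hbdm (Ne.symm horbne')
  have hO1Q : orb n (1, c) ⊆ Q := QC.orb_subset h hr hq1
  have hO2Q : orb n (m, d) ⊆ Q := QC.orb_subset h hr hq2
  -- key memberships
  have e1 : (1, n+1-c) ∈ orb n (c, 1) := by rw [cells1']; simp
  have e2 : (n+1-c, 1) ∈ orb n (1, c) := by rw [cells1]; simp
  have e3 : (m, n+1-d) ∈ orb n (d, m) := by rw [cells2']; simp
  have e4 : (n+1-d, m) ∈ orb n (m, d) := by rw [cells2]; simp
  have hu1 : (1, n+1-c) ∈ (uFlip n Q) := by rw [huQ]; exact Finset.mem_union_right _ e1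
  have hmdU : (m, d) ∈ (uFlip n Q) := by
    rw [huQ]
    exact Finset.mem_union_left _ (Finset.mem_sdiff.mpr ⟨hq2, hmd_n1c⟩)
  have h1cV : (1, c) ∈ (vFlip n Q) := by
    rw [hvQ]
    exact Finset.mem_union_left _ (Finset.mem_sdiff.mpr ⟨hq1, h1c_md⟩)
  have hv1 : (m, n+1-d) ∈ (vFlip n Q) := by rw [hvQ]; exact Finset.mem_union_right _ e3
  -- qcol computations
  have qcolU1 : qcol (uFlip n Q) 1 = n+1-c := qcol_pair hu_conf hu1
  have qcolUm : qcol (uFlip n Q) m = d := qcol_pair hu_conf hmdU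
  have qcolV1 : qcol (vFlip n Q) 1 = c := qcol_pair hv_conf h1cV
  have qcolVm : qcol (vFlip n Q) m = n+1-d := qcol_pair hv_conf hv1
  -- orbit identities
  have oid1 : orb n (1, n+1-c) = orb n (c, 1) := orb_eq_of_mem hbc1 e1
  have oid2 : orb n (n+1-c, 1) = orb n (1, c) := orb_eq_of_mem hb1c e2
  have oid3 : orb n (m, n+1-d) = orb n (d, m) := orb_eq_of_mem hbdm e3
  have oid4 : orb n (n+1-d, m) = orb n (m, d) := orb_eq_of_mem hbmd e4
  -- uFlip (uFlip n Q)
  have huU : uFlip n (uFlip n Q) = ((uFlip n Q) \ orb n (c, 1)) ∪ orb n (1, c) := by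
    show ((uFlip n Q) \ orb n (1, qcol (uFlip n Q) 1)) ∪ orb n (qcol (uFlip n Q) 1, 1) = _
    rw [qcolU1, oid1, oid2]
  have hffQ : uFlip n (uFlip n Q) = Q := by
    rw [huU]
    have step : (uFlip n Q) \ orb n (c, 1) = Q \ orb n (1, c) := by
      rw [huQ]
      ext z
      have hz1 := hu_notin z
      simp only [Finset.mem_sdiff, Finset.mem_union]
      constructor
      · rintro ⟨hz2 | hz2, hz3⟩
        · exact hz2
        · exact absurd hz2 hz3
      · intro hz2
        exact ⟨Or.inl hz2, fun hz3 => hz1 hz3 hz2.1⟩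
    rw [step, Finset.sdiff_union_of_subset hO1Q]
  -- vFlip (vFlip n Q)
  have hmV : mrowAux n (qcol (vFlip n Q) 1) = m := by rw [qcolV1]
  have hvV : vFlip n (vFlip n Q) = ((vFlip n Q) \ orb n (m, n+1-d)) ∪ orb n (n+1-d, m) := by
    show ((vFlip n Q) \ orb n (mrowAux n (qcol (vFlip n Q) 1), qcol (vFlip n Q) (mrowAux n (qcol (vFlip n Q) 1)))) ∪
      orb n (qcol (vFlip n Q) (mrowAux n (qcol (vFlip n Q) 1)), mrowAux n (qcol (vFlip n Q) 1)) = _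
    rw [hmV, qcolVm]
  have hggQ : vFlip n (vFlip n Q) = Q := by
    rw [hvV, oid3, oid4]
    have step : (vFlip n Q) \ orb n (d, m) = Q \ orb n (m, d) := by
      rw [hvQ]
      ext z
      have hz1 := hv_notin z
      simp only [Finset.mem_sdiff, Finset.mem_union]
      constructor
      · rintro ⟨hz2 | hz2, hz3⟩
        · exact hz2
        · exact absurd hz2 hz3
      · intro hz2
        exact ⟨Or.inl hz2, fun hz3 => hz1 hz3 hz2.1⟩
    rw [step, Finset.sdiff_union_of_subset hO2Q]
  -- commutation
  have hmU : mrowAux n (qcol (uFlip n Q) 1) = m := by rw [qcolU1, mrowAux_symm n c c1 cn]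
  have hvU : vFlip n (uFlip n Q) = ((uFlip n Q) \ orb n (m, d)) ∪ orb n (d, m) := by
    show ((uFlip n Q) \ orb n (mrowAux n (qcol (uFlip n Q) 1), qcol (uFlip n Q) (mrowAux n (qcol (uFlip n Q) 1)))) ∪
      orb n (qcol (uFlip n Q) (mrowAux n (qcol (uFlip n Q) 1)), mrowAux n (qcol (uFlip n Q) 1)) = _
    rw [hmU, qcolUm]
  have huV : uFlip n (vFlip n Q) = ((vFlip n Q) \ orb n (1, c)) ∪ orb n (c, 1) := by
    show ((vFlip n Q) \ orb n (1, qcol (vFlip n Q) 1)) ∪ orb n (qcol (vFlip n Q) 1, 1) = _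
    rw [qcolV1]
  have hcomm : uFlip n (vFlip n Q) = vFlip n (uFlip n Q) := by
    rw [huV, hvU, huQ, hvQ]
    ext z
    have f1 := hu_notin z
    have f2 := hv_notin z
    have f3 : z ∈ orb n (1, c) → z ∈ Q := fun hz => hO1Q hz
    have f4 : z ∈ orb n (m, d) → z ∈ Q := fun hz => hO2Q hz
    simp only [Finset.mem_union, Finset.mem_sdiff]
    constructor
    · rintro (⟨⟨hz1, hz2⟩ | hz1, hz3⟩ | hz1)
      · exact Or.inl ⟨Or.inl ⟨hz1, hz3⟩, hz2⟩
      · exact Or.inr hz1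
      · exact Or.inl ⟨Or.inr hz1, fun hz2 => f1 hz1 (f4 hz2)⟩
    · rintro (⟨⟨hz1, hz2⟩ | hz1, hz3⟩ | hz1)
      · exact Or.inl ⟨Or.inl ⟨hz1, hz3⟩, hz2⟩
      · exact Or.inr hz1
      · exact Or.inl ⟨Or.inr hz1, fun hz2 => f2 hz1 (f3 hz2)⟩
  -- inequalities
  have hune : (uFlip n Q) ≠ Q := by
    intro e
    have hmem : (1, n+1-c) ∈ Q := e ▸ hu1
    have := QC.row h hmem hq1 rfl
    simp only [Prod.mk.injEq] at this
    omega
  have hvne : (vFlip n Q) ≠ Q := by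
    intro e
    have hmem : (m, n+1-d) ∈ Q := e ▸ hv1
    have := QC.row h hmem hq2 rfl
    simp only [Prod.mk.injEq] at this
    omega
  have hfgne : uFlip n (vFlip n Q) ≠ Q := by
    intro e
    have hmem : (m, n+1-d) ∈ uFlip n (vFlip n Q) := by
      rw [huV]
      refine Finset.mem_union_left _ (Finset.mem_sdiff.mpr ⟨hv1, fun hz => ?_⟩)
      exact hv_notin _ e3 (hO1Q hz)
    rw [e] at hmem
    have := QC.row h hmem hq2 rfl
    simp only [Prod.mk.injEq] at this
    omega
  exact ⟨⟨hu_conf, hu_sym⟩, ⟨hv_conf, hv_sym⟩, hffQ, hggQ, hcomm, hune, hvne, hfgne⟩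

lemma four_dvd_S1 {n : ℕ} (hn8 : 8 ≤ n) (hmod : n % 4 = 0 ∨ n % 4 = 1) :
    4 ∣ ((Sset n).filter (fun Q => rAct n Q = Q)).card := by
  apply four_dvd_klein _ (uFlip n) (vFlip n)
  · intro Q hQ
    rw [Finset.mem_filter, mem_Sset] at hQ ⊢
    exact ⟨(master hn8 hmod hQ.1 hQ.2).1.1, (master hn8 hmod hQ.1 hQ.2).1.2⟩
  · intro Q hQ
    rw [Finset.mem_filter, mem_Sset] at hQ ⊢
    exact ⟨(master hn8 hmod hQ.1 hQ.2).2.1.1, (master hn8 hmod hQ.1 hQ.2).2.1.2⟩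
  · intro Q hQ
    rw [Finset.mem_filter, mem_Sset] at hQ
    have M := master hn8 hmod hQ.1 hQ.2
    have M2 := master hn8 hmod M.1.1 M.1.2
    exact M.2.2.1
  · intro Q hQ
    rw [Finset.mem_filter, mem_Sset] at hQ
    exact (master hn8 hmod hQ.1 hQ.2).2.2.2.1
  · intro Q hQ
    rw [Finset.mem_filter, mem_Sset] at hQ
    exact (master hn8 hmod hQ.1 hQ.2).2.2.2.2.1
  · intro Q hQ
    rw [Finset.mem_filter, mem_Sset] at hQ
    exact (master hn8 hmod hQ.1 hQ.2).2.2.2.2.2.1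
  · intro Q hQ
    rw [Finset.mem_filter, mem_Sset] at hQ
    exact (master hn8 hmod hQ.1 hQ.2).2.2.2.2.2.2.1
  · intro Q hQ
    rw [Finset.mem_filter, mem_Sset] at hQ
    exact (master hn8 hmod hQ.1 hQ.2).2.2.2.2.2.2.2

lemma S1_empty {n : ℕ} (hmod : ¬(n % 4 = 0 ∨ n % 4 = 1)) :
    (Sset n).filter (fun Q => rAct n Q = Q) = ∅ := by
  rw [Finset.filter_eq_empty_iff]
  intro Q hQ hr
  exact hmod (mod4_of_sym (mem_Sset.mp hQ) hr)

/-- For every `n ≥ 2` with `n ≠ 4` and `n ≠ 5`, `Q(n)` is divisible by `4`. -/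
theorem queensCount_div_four (n : ℕ) (hn : 2 ≤ n) (h4 : n ≠ 4) (h5 : n ≠ 5) :
    4 ∣ queensCount n := by
  have hq : queensCount n = (Sset n).card := rfl
  have hsplit1 := Finset.card_filter_add_card_filter_not
    (s := Sset n) (p := fun Q => rAct n (rAct n Q) = Q)
  have hsplit2 := Finset.card_filter_add_card_filter_not
    (s := (Sset n).filter (fun Q => rAct n (rAct n Q) = Q)) (p := fun Q => rAct n Q = Q)
  have eA : ((Sset n).filter (fun Q => rAct n (rAct n Q) = Q)).filter
      (fun Q => rAct n Q = Q) = (Sset n).filter (fun Q => rAct n Q = Q) := by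
    rw [Finset.filter_filter]
    apply Finset.filter_congr
    intro Q hQ
    constructor
    · exact fun hh => hh.2
    · intro hh
      exact ⟨by rw [hh, hh], hh⟩
  have eB : ((Sset n).filter (fun Q => rAct n (rAct n Q) = Q)).filter
      (fun Q => ¬rAct n Q = Q) = (Sset n).filter
      (fun Q => rAct n (rAct n Q) = Q ∧ rAct n Q ≠ Q) := by
    rw [Finset.filter_filter]
  have d4 : 4 ∣ ((Sset n).filter (fun Q => ¬rAct n (rAct n Q) = Q)).card := four_dvd_S4 hn
  have d2 : 4 ∣ ((Sset n).filter
      (fun Q => rAct n (rAct n Q) = Q ∧ rAct n Q ≠ Q)).card := four_dvd_S2 hn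
  have d1 : 4 ∣ ((Sset n).filter (fun Q => rAct n Q = Q)).card := by
    by_cases hmod : n % 4 = 0 ∨ n % 4 = 1
    · exact four_dvd_S1 (by omega) hmod
    · rw [S1_empty hmod]
      simp
  rw [eA] at hsplit2
  rw [eB] at hsplit2
  rw [hq, ← hsplit1, ← hsplit2]
  omega
end

section
/- For every n ≥ 2 and every n-queens configuration Q, the stabilizer {x ∈ D₄ : xQ = Q} of Q under the action of the dihedral group D₄ is exactly one of the three subgroups {e}, {e, r²}, {e, r, r², r³}; in particular it has cardinality 1, 2 or 4. -/
open scoped Classical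

/-- The dihedral group `D₄ = {r^k s^b : k ∈ Fin 4, b ∈ Bool}` acting on subsets of the
board; the element `(k, b)` acts by `Q ↦ r^k (s^b Q)` (rightmost map applied first). -/
def d4Act (n : ℕ) (x : Fin 4 × Bool) (Q : Finset (ℕ × ℕ)) : Finset (ℕ × ℕ) :=
  (rAct n)^[(x.1 : ℕ)] (if x.2 then sAct n Q else Q)

/-- The `D₄`-orbit of `Q`, i.e. `{xQ : x ∈ D₄}`. -/
def d4Orbit (n : ℕ) (Q : Finset (ℕ × ℕ)) : Finset (Finset (ℕ × ℕ)) :=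
  Finset.univ.image (fun x : Fin 4 × Bool => d4Act n x Q)

/-- `F_r`: the set of `n`-queens configurations fixed by the rotation `r`. -/
noncomputable def Fr (n : ℕ) : Finset (Finset (ℕ × ℕ)) :=
  (board n).powerset.filter (fun Q => IsQueensConfig n Q ∧ rAct n Q = Q)

/-- `F_{r² ∖ r}`: the `n`-queens configurations fixed by `r²` but not by `r`. -/
noncomputable def Fr2 (n : ℕ) : Finset (Finset (ℕ × ℕ)) :=
  (board n).powerset.filter
    (fun Q => IsQueensConfig n Q ∧ rAct n (rAct n Q) = Q ∧ rAct n Q ≠ Q)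

/-- `F_e`: the `n`-queens configurations fixed by no non-identity element of `D₄`. -/
noncomputable def Fe (n : ℕ) : Finset (Finset (ℕ × ℕ)) :=
  (board n).powerset.filter
    (fun Q => IsQueensConfig n Q ∧
      ∀ x : Fin 4 × Bool, x ≠ ((0 : Fin 4), false) → d4Act n x Q ≠ Q)

namespace QueensAux

lemma image_fix {Q : Finset (ℕ × ℕ)} {f : ℕ × ℕ → ℕ × ℕ} (h : Q.image f = Q) :
    ∀ p ∈ Q, f p ∈ Q := fun p hp => h ▸ Finset.mem_image_of_mem f hp

lemma bounds {n : ℕ} {Q : Finset (ℕ × ℕ)} (hb : Q ⊆ board n) :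
    ∀ p ∈ Q, 1 ≤ p.1 ∧ p.1 ≤ n ∧ 1 ≤ p.2 ∧ p.2 ≤ n := by
  intro p hp
  have := hb hp
  simp only [board, Finset.mem_product, Finset.mem_Icc] at this
  exact ⟨this.1.1, this.1.2, this.2.1, this.2.2⟩

lemma card_le_one_absurd {n : ℕ} (hn : 2 ≤ n) {Q : Finset (ℕ × ℕ)}
    (hc : Q.card = n) (h : ∀ p ∈ Q, ∀ q ∈ Q, p = q) : False := by
  have := Finset.card_le_one.mpr h
  omega

/-- `s` cannot fix a queens configuration. -/
lemma not_fix_s {n : ℕ} (hn : 2 ≤ n) {Q : Finset (ℕ × ℕ)} (hQ : IsQueensConfig n Q) :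
    sAct n Q ≠ Q := by
  obtain ⟨hb, hc, hrow, hcol, hd, ha⟩ := hQ
  intro h
  have hfix := image_fix h
  refine card_le_one_absurd hn hc (fun p hp q hq => ?_)
  have hp2 : p = (p.1, n + 1 - p.2) :=
    hrow p hp _ (hfix p hp) rfl
  have hq2 : q = (q.1, n + 1 - q.2) :=
    hrow q hq _ (hfix q hq) rfl
  have bp := bounds hb p hp
  have bq := bounds hb q hq
  have e1 : p.2 = n + 1 - p.2 := congrArg Prod.snd hp2
  have e2 : q.2 = n + 1 - q.2 := congrArg Prod.snd hq2
  exact hcol p hp q hq (by omega)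

/-- `r s` (transpose) cannot fix a queens configuration. -/
lemma not_fix_rs {n : ℕ} (hn : 2 ≤ n) {Q : Finset (ℕ × ℕ)} (hQ : IsQueensConfig n Q) :
    rAct n (sAct n Q) ≠ Q := by
  obtain ⟨hb, hc, hrow, hcol, hd, ha⟩ := hQ
  intro h
  rw [sAct, rAct, Finset.image_image] at h
  have hfix := image_fix h
  refine card_le_one_absurd hn hc (fun p hp q hq => ?_)
  have bp := bounds hb p hp
  have bq := bounds hb q hq
  have hp' := hfix p hp
  have hq' := hfix q hq
  simp only [Function.comp] at hp' hq'
  have hps : ((n + 1 - (n + 1 - p.2) : ℕ), p.1) = (p.2, p.1) := by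
    rw [Prod.mk.injEq]; omega
  have hqs : ((n + 1 - (n + 1 - q.2) : ℕ), q.1) = (q.2, q.1) := by
    rw [Prod.mk.injEq]; omega
  rw [hps] at hp'
  rw [hqs] at hq'
  have ep : p = (p.2, p.1) := ha p hp _ hp' (by simp; omega)
  have eq' : q = (q.2, q.1) := ha q hq _ hq' (by simp; omega)
  have ep1 : p.1 = p.2 := by rw [Prod.ext_iff] at ep; exact ep.1
  have eq1 : q.1 = q.2 := by rw [Prod.ext_iff] at eq'; exact eq'.1
  exact hd p hp q hq (by omega)

/-- `r² s` cannot fix a queens configuration. -/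
lemma not_fix_r2s {n : ℕ} (hn : 2 ≤ n) {Q : Finset (ℕ × ℕ)} (hQ : IsQueensConfig n Q) :
    rAct n (rAct n (sAct n Q)) ≠ Q := by
  obtain ⟨hb, hc, hrow, hcol, hd, ha⟩ := hQ
  intro h
  rw [sAct, rAct, rAct, Finset.image_image, Finset.image_image] at h
  have hfix := image_fix h
  refine card_le_one_absurd hn hc (fun p hp q hq => ?_)
  have bp := bounds hb p hp
  have bq := bounds hb q hq
  have hp' := hfix p hp
  have hq' := hfix q hq
  simp only [Function.comp] at hp' hq'
  have hps : ((n + 1 - p.1 : ℕ), n + 1 - (n + 1 - p.2)) = (n + 1 - p.1, p.2) := by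
    rw [Prod.mk.injEq]; omega
  have hqs : ((n + 1 - q.1 : ℕ), n + 1 - (n + 1 - q.2)) = (n + 1 - q.1, q.2) := by
    rw [Prod.mk.injEq]; omega
  rw [hps] at hp'
  rw [hqs] at hq'
  have ep : p = (n + 1 - p.1, p.2) := hcol p hp _ hp' rfl
  have eq' : q = (n + 1 - q.1, q.2) := hcol q hq _ hq' rfl
  have ep1 : p.1 = n + 1 - p.1 := by rw [Prod.ext_iff] at ep; exact ep.1
  have eq1 : q.1 = n + 1 - q.1 := by rw [Prod.ext_iff] at eq'; exact eq'.1
  exact hrow p hp q hq (by omega)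

/-- `r³ s` cannot fix a queens configuration. -/
lemma not_fix_r3s {n : ℕ} (hn : 2 ≤ n) {Q : Finset (ℕ × ℕ)} (hQ : IsQueensConfig n Q) :
    rAct n (rAct n (rAct n (sAct n Q))) ≠ Q := by
  obtain ⟨hb, hc, hrow, hcol, hd, ha⟩ := hQ
  intro h
  rw [sAct, rAct, rAct, rAct, Finset.image_image, Finset.image_image,
    Finset.image_image] at h
  have hfix := image_fix h
  refine card_le_one_absurd hn hc (fun p hp q hq => ?_)
  have bp := bounds hb p hp
  have bq := bounds hb q hq
  have hp' := hfix p hp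
  have hq' := hfix q hq
  simp only [Function.comp] at hp' hq'
  have hps : ∀ x ∈ Q, 1 ≤ x.1 ∧ x.1 ≤ n ∧ 1 ≤ x.2 ∧ x.2 ≤ n →
      ((n + 1 - (n + 1 - (n + 1 - x.2)) : ℕ), n + 1 - x.1) = (n + 1 - x.2, n + 1 - x.1) := by
    intro x _ hx; rw [Prod.mk.injEq]; omega
  rw [hps p hp bp] at hp'
  rw [hps q hq bq] at hq'
  have ep : p = ((n + 1 - p.2 : ℕ), n + 1 - p.1) := hd p hp _ hp' (by simp; omega)
  have eq' : q = ((n + 1 - q.2 : ℕ), n + 1 - q.1) := hd q hq _ hq' (by simp; omega)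
  have ep1 : p.1 = n + 1 - p.2 ∧ p.2 = n + 1 - p.1 := by
    simpa [Prod.ext_iff] using ep
  have eq1 : q.1 = n + 1 - q.2 ∧ q.2 = n + 1 - q.1 := by
    simpa [Prod.ext_iff] using eq'
  exact ha p hp q hq (by omega)

/-- `r⁴ = id` on subsets of the board. -/
lemma r4 {n : ℕ} {Q : Finset (ℕ × ℕ)} (hb : Q ⊆ board n) :
    rAct n (rAct n (rAct n (rAct n Q))) = Q := by
  rw [rAct, rAct, rAct, rAct, Finset.image_image, Finset.image_image,
    Finset.image_image]
  nth_rewrite 2 [← Finset.image_id (s := Q)]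
  apply Finset.image_congr
  intro p hp
  have := bounds hb p hp
  simp only [Function.comp, id]
  rw [Prod.mk.injEq]
  constructor <;> omega

end QueensAux

/-- For `n ≥ 2`, the stabilizer of an `n`-queens configuration under the `D₄`-action
is exactly one of `{e}`, `{e, r²}`, `{e, r, r², r³}`; in particular its cardinality
is `1`, `2` or `4`. Here the `D₄`-element `(k, b)` denotes `r^k s^b`. -/
theorem stabilizer_trichotomy (n : ℕ) (hn : 2 ≤ n) (Q : Finset (ℕ × ℕ))
    (hQ : IsQueensConfig n Q) :
    (Finset.univ.filter (fun x : Fin 4 × Bool => d4Act n x Q = Q) =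
        {((0 : Fin 4), false)} ∨
      Finset.univ.filter (fun x : Fin 4 × Bool => d4Act n x Q = Q) =
        {((0 : Fin 4), false), ((2 : Fin 4), false)} ∨
      Finset.univ.filter (fun x : Fin 4 × Bool => d4Act n x Q = Q) =
        {((0 : Fin 4), false), ((1 : Fin 4), false),
         ((2 : Fin 4), false), ((3 : Fin 4), false)}) ∧
    ((Finset.univ.filter (fun x : Fin 4 × Bool => d4Act n x Q = Q)).card = 1 ∨
      (Finset.univ.filter (fun x : Fin 4 × Bool => d4Act n x Q = Q)).card = 2 ∨
      (Finset.univ.filter (fun x : Fin 4 × Bool => d4Act n x Q = Q)).card = 4) := by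
  
  classical
  have hs := QueensAux.not_fix_s hn hQ
  have hrs := QueensAux.not_fix_rs hn hQ
  have hr2s := QueensAux.not_fix_r2s hn hQ
  have hr3s := QueensAux.not_fix_r3s hn hQ
  have hr4 := QueensAux.r4 (n := n) hQ.1
  have r3_to_r1 : rAct n (rAct n (rAct n Q)) = Q → rAct n Q = Q := by
    intro h3
    have := congrArg (rAct n) h3
    rw [hr4] at this
    exact this.symm
  by_cases h1 : rAct n Q = Q
  · have h2 : rAct n (rAct n Q) = Q := by rw [h1, h1]
    have h3 : rAct n (rAct n (rAct n Q)) = Q := by rw [h1, h1, h1]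
    have hset : Finset.univ.filter (fun x : Fin 4 × Bool => d4Act n x Q = Q) =
        {((0 : Fin 4), false), ((1 : Fin 4), false),
         ((2 : Fin 4), false), ((3 : Fin 4), false)} := by
      apply Finset.Subset.antisymm
      · intro x hx
        obtain ⟨k, b⟩ := x
        rw [Finset.mem_filter] at hx
        cases b
        · fin_cases k <;> decide
        · exfalso
          fin_cases k
          · exact hs hx.2
          · exact hrs hx.2
          · exact hr2s hx.2
          · exact hr3s hx.2
      · intro x hx
        rw [Finset.mem_filter]
        refine ⟨Finset.mem_univ _, ?_⟩
        simp only [Finset.mem_insert, Finset.mem_singleton] at hx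
        rcases hx with h | h | h | h <;> subst h
        · rfl
        · exact h1
        · exact h2
        · exact h3
    exact ⟨Or.inr (Or.inr hset), Or.inr (Or.inr (by rw [hset]; decide))⟩
  · have h3 : ¬ rAct n (rAct n (rAct n Q)) = Q := fun h => h1 (r3_to_r1 h)
    by_cases h2 : rAct n (rAct n Q) = Q
    · have hset : Finset.univ.filter (fun x : Fin 4 × Bool => d4Act n x Q = Q) =
          {((0 : Fin 4), false), ((2 : Fin 4), false)} := by
        apply Finset.Subset.antisymm
        · intro x hx
          obtain ⟨k, b⟩ := x
          rw [Finset.mem_filter] at hx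
          cases b
          · fin_cases k
            · decide
            · exact absurd hx.2 h1
            · decide
            · exact absurd hx.2 h3
          · exfalso
            fin_cases k
            · exact hs hx.2
            · exact hrs hx.2
            · exact hr2s hx.2
            · exact hr3s hx.2
        · intro x hx
          rw [Finset.mem_filter]
          refine ⟨Finset.mem_univ _, ?_⟩
          simp only [Finset.mem_insert, Finset.mem_singleton] at hx
          rcases hx with h | h <;> subst h
          · rfl
          · exact h2
      exact ⟨Or.inr (Or.inl hset), Or.inr (Or.inl (by rw [hset]; decide))⟩
    · have hset : Finset.univ.filter (fun x : Fin 4 × Bool => d4Act n x Q = Q) =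
          {((0 : Fin 4), false)} := by
        apply Finset.Subset.antisymm
        · intro x hx
          obtain ⟨k, b⟩ := x
          rw [Finset.mem_filter] at hx
          cases b
          · fin_cases k
            · decide
            · exact absurd hx.2 h1
            · exact absurd hx.2 h2
            · exact absurd hx.2 h3
          · exfalso
            fin_cases k
            · exact hs hx.2
            · exact hrs hx.2
            · exact hr2s hx.2
            · exact hr3s hx.2
        · intro x hx
          rw [Finset.mem_filter]
          refine ⟨Finset.mem_univ _, ?_⟩
          simp only [Finset.mem_singleton] at hx
          subst hx
          rfl
      exact ⟨Or.inl hset, Or.inl (by rw [hset]; decide)⟩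
end

section
/- If n ≡ 2 (mod 4) or n ≡ 3 (mod 4), then no n-queens configuration is fixed by the 90° rotation r; that is, for every n-queens configuration Q one has rQ ≠ Q. Equivalently, if some n-queens configuration Q satisfies rQ = Q, then n ≡ 0 (mod 4) or n ≡ 1 (mod 4). -/
open scoped Classical

/-- A finite set closed under a map `g` of order dividing 4, whose 2-periodic points
are fixed and which has at most one fixed point, has cardinality ≡ 0 or 1 mod 4. -/
lemma quad_count {α : Type*} [DecidableEq α] (g : α → α) (Q : Finset α)
    (hcl : ∀ x ∈ Q, g x ∈ Q)
    (h4 : ∀ x ∈ Q, g (g (g (g x))) = x)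
    (h2 : ∀ x ∈ Q, g (g x) = x → g x = x)
    (hfix : ∀ x ∈ Q, ∀ y ∈ Q, g x = x → g y = y → x = y) :
    Q.card % 4 = 0 ∨ Q.card % 4 = 1 := by
  induction Q using Finset.strongInduction with
  | _ Q IH =>
  by_cases hall : ∀ x ∈ Q, g x = x
  · have h1 : Q.card ≤ 1 := Finset.card_le_one.mpr
      (fun a ha b hb => hfix a ha b hb (hall a ha) (hall b hb))
    omega
  · push_neg at hall
    obtain ⟨x, hx, hgx⟩ := hall
    have hinj : ∀ a ∈ Q, ∀ b ∈ Q, g a = g b → a = b := by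
      intro a ha b hb hab
      have ha4 := h4 a ha
      rw [hab, h4 b hb] at ha4
      exact ha4.symm
    have hx1 : g x ∈ Q := hcl x hx
    have hx2 : g (g x) ∈ Q := hcl _ hx1
    have hx3 : g (g (g x)) ∈ Q := hcl _ hx2
    have ne1 : g x ≠ x := hgx
    have ne2 : g (g x) ≠ x := fun e => hgx (h2 x hx e)
    have ne3 : g (g (g x)) ≠ x := by
      intro e
      apply hgx
      have h' := congrArg g e
      rw [h4 x hx] at h'
      exact h'.symm
    have ne12' : g x ≠ g (g x) := by
      intro e
      exact hgx (hinj x hx _ hx1 e).symm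
    have ne13 : g x ≠ g (g (g x)) := by
      intro e
      exact ne2 (hinj x hx _ hx2 e).symm
    have ne23 : g (g x) ≠ g (g (g x)) := by
      intro e
      exact ne12' (hinj _ hx1 _ hx2 e)
    set O : Finset α := {x, g x, g (g x), g (g (g x))} with hO
    have hOQ : O ⊆ Q := by
      intro y hy
      simp only [hO, Finset.mem_insert, Finset.mem_singleton] at hy
      rcases hy with rfl | rfl | rfl | rfl <;> assumption
    have hOcard : O.card = 4 := by
      rw [hO]
      rw [Finset.card_insert_of_notMem (by
        simp only [Finset.mem_insert, Finset.mem_singleton]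
        push_neg
        exact ⟨fun e => ne1 e.symm, fun e => ne2 e.symm, fun e => ne3 e.symm⟩)]
      rw [Finset.card_insert_of_notMem (by
        simp only [Finset.mem_insert, Finset.mem_singleton]
        push_neg
        exact ⟨ne12', ne13⟩)]
      rw [Finset.card_insert_of_notMem (by
        simpa using ne23)]
      simp
    set Q' : Finset α := Q \ O with hQ'
    have hQ'ss : Q' ⊂ Q := by
      exact Finset.sdiff_ssubset hOQ ⟨x, by simp [hO]⟩
    have hmemO : ∀ y, y ∈ O ↔ (y = x ∨ y = g x ∨ y = g (g x) ∨ y = g (g (g x))) := by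
      intro y; simp [hO]
    have hcl' : ∀ y ∈ Q', g y ∈ Q' := by
      intro y hy
      rw [hQ', Finset.mem_sdiff] at hy ⊢
      refine ⟨hcl y hy.1, ?_⟩
      intro hgy
      apply hy.2
      rw [hmemO] at hgy ⊢
      have hy4 := h4 y hy.1
      rcases hgy with e | e | e | e
      · right; right; right
        have := congrArg (fun z => g (g (g z))) e
        rw [hy4] at this
        exact this
      · exact Or.inl (hinj y hy.1 x hx e)
      · exact Or.inr (Or.inl (hinj y hy.1 _ hx1 e))
      · exact Or.inr (Or.inr (Or.inl (hinj y hy.1 _ hx2 e)))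
    have hsub : ∀ y ∈ Q', y ∈ Q := fun y hy => (Finset.mem_sdiff.mp hy).1
    have key := IH Q' hQ'ss hcl' (fun y hy => h4 y (hsub y hy))
      (fun y hy => h2 y (hsub y hy))
      (fun a ha b hb => hfix a (hsub a ha) b (hsub b hb))
    have hcards : Q'.card = Q.card - 4 := by
      rw [hQ', Finset.card_sdiff_of_subset hOQ, hOcard]
    have h4le : 4 ≤ Q.card := hOcard ▸ Finset.card_le_card hOQ
    omega

/-- If `n ≡ 2 (mod 4)` or `n ≡ 3 (mod 4)`, then no `n`-queens configuration is
fixed by the 90° rotation `r`. -/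
theorem no_r_fixed_of_mod (n : ℕ) (h : n % 4 = 2 ∨ n % 4 = 3)
    (Q : Finset (ℕ × ℕ)) (hQ : IsQueensConfig n Q) :
    rAct n Q ≠ Q := by
  intro heq
  set g : ℕ × ℕ → ℕ × ℕ := fun p => (n + 1 - p.2, p.1) with hg
  have hboard : ∀ p ∈ Q, 1 ≤ p.1 ∧ p.1 ≤ n ∧ 1 ≤ p.2 ∧ p.2 ≤ n := by
    intro p hp
    have := hQ.1 hp
    simp only [board, Finset.mem_product, Finset.mem_Icc] at this
    exact ⟨this.1.1, this.1.2, this.2.1, this.2.2⟩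
  have hcl : ∀ x ∈ Q, g x ∈ Q := by
    intro x hx
    rw [← heq]
    exact Finset.mem_image_of_mem _ hx
  have h4 : ∀ x ∈ Q, g (g (g (g x))) = x := by
    intro x hx
    obtain ⟨hb1, hb2, hb3, hb4⟩ := hboard x hx
    obtain ⟨i, j⟩ := x
    simp only [hg, Prod.mk.injEq]
    simp only at hb1 hb2 hb3 hb4
    omega
  have h2 : ∀ x ∈ Q, g (g x) = x → g x = x := by
    intro x hx he
    obtain ⟨hb1, hb2, hb3, hb4⟩ := hboard x hx
    obtain ⟨i, j⟩ := x
    simp only [hg, Prod.mk.injEq] at he ⊢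
    simp only at hb1 hb2 hb3 hb4
    omega
  have hfix : ∀ x ∈ Q, ∀ y ∈ Q, g x = x → g y = y → x = y := by
    intro x hx y hy hex hey
    obtain ⟨hb1, hb2, hb3, hb4⟩ := hboard x hx
    obtain ⟨hc1, hc2, hc3, hc4⟩ := hboard y hy
    obtain ⟨i, j⟩ := x
    obtain ⟨k, l⟩ := y
    simp only [hg, Prod.mk.injEq] at hex hey ⊢
    simp only at hb1 hb2 hb3 hb4 hc1 hc2 hc3 hc4
    omega
  have := quad_count g Q hcl h4 h2 hfix
  rw [hQ.2.1] at this
  omega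
end

section
/- Suppose n ≡ 0 (mod 4) or n ≡ 1 (mod 4) with n ≥ 4. Then every n-queens configuration Q fixed by the 90° rotation r contains the border configuration U_ℓ for exactly one ℓ ∈ [n]. -/
open scoped Classical

/-- The border configuration `U_ℓ`: four `r`-symmetric border squares, together with
the center square `((n+1)/2, (n+1)/2)` when `n ≡ 1 (mod 4)`. -/
def borderU (n ℓ : ℕ) : Finset (ℕ × ℕ) :=
  if n % 4 = 0 then
    {(1, ℓ), (ℓ, n), (n, n + 1 - ℓ), (n + 1 - ℓ, 1)}
  else
    {(1, ℓ), (ℓ, n), (n, n + 1 - ℓ), (n + 1 - ℓ, 1)} ∪ {((n + 1) / 2, (n + 1) / 2)}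

/-- For `n ≥ 4` with `n ≡ 0` or `1 (mod 4)`, every `n`-queens configuration fixed by
`r` contains the border configuration `U_ℓ` for exactly one `ℓ ∈ [n]`. -/
theorem exists_unique_borderU (n : ℕ) (hn : 4 ≤ n) (hmod : n % 4 = 0 ∨ n % 4 = 1)
    (Q : Finset (ℕ × ℕ)) (hQ : IsQueensConfig n Q) (hfix : rAct n Q = Q) :
    ∃! ℓ, ℓ ∈ Finset.Icc 1 n ∧ borderU n ℓ ⊆ Q := by
  obtain ⟨hsubQ, hcard, hrow, hcol, hdiag, hanti⟩ := hQ
  -- transport along the rotation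
  have hstep : ∀ p ∈ Q, (n + 1 - p.2, p.1) ∈ Q := by
    intro p hp
    rw [← hfix]
    exact Finset.mem_image_of_mem _ hp
  -- bounds on coordinates of queens
  have hbd : ∀ p ∈ Q, 1 ≤ p.1 ∧ p.1 ≤ n ∧ 1 ≤ p.2 ∧ p.2 ≤ n := by
    intro p hp
    have h := hsubQ hp
    simp only [board, Finset.mem_product, Finset.mem_Icc] at h
    exact ⟨h.1.1, h.1.2, h.2.1, h.2.2⟩
  -- every row contains a queen
  have himg : Q.image Prod.fst = Finset.Icc 1 n := by
    apply Finset.eq_of_subset_of_card_le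
    · intro i hi
      obtain ⟨p, hp, rfl⟩ := Finset.mem_image.mp hi
      have h := hbd p hp
      exact Finset.mem_Icc.mpr ⟨h.1, h.2.1⟩
    · rw [Finset.card_image_of_injOn (fun p hp q hq h => hrow p hp q hq h), hcard,
        Nat.card_Icc]
      omega
  -- there is a queen in row 1
  have h1 : (1 : ℕ) ∈ Q.image Prod.fst := by
    rw [himg]; exact Finset.mem_Icc.mpr ⟨le_refl 1, by omega⟩
  obtain ⟨p, hp, hp1⟩ := Finset.mem_image.mp h1
  obtain ⟨i, ℓ⟩ := p
  simp only at hp1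
  subst hp1
  have hℓbd := hbd _ hp
  simp only at hℓbd
  -- the four border squares
  have h2 : (n + 1 - ℓ, 1) ∈ Q := hstep _ hp
  have h3 : (n, n + 1 - ℓ) ∈ Q := by
    have := hstep _ h2
    simpa using this
  have h4 : (ℓ, n) ∈ Q := by
    have := hstep _ h3
    simp only at this
    have e1 : n + 1 - (n + 1 - ℓ) = ℓ := by omega
    have e2 : n + 1 - 1 = n := by omega
    rwa [e1] at this
  -- the center is in Q when n % 4 = 1
  have hcenter : n % 4 = 1 → ((n + 1) / 2, (n + 1) / 2) ∈ Q := by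
    intro h41
    have hg : ∀ p ∈ Q, (n + 1 - p.1, n + 1 - p.2) ∈ Q := by
      intro p hp
      have := hstep _ (hstep _ hp)
      simpa using this
    let g : ↥Q → ↥Q := fun p => ⟨(n + 1 - (p : ℕ × ℕ).1, n + 1 - (p : ℕ × ℕ).2),
      hg _ p.2⟩
    have hinv : Function.Involutive g := by
      rintro ⟨⟨a, b⟩, hm⟩
      have h := hbd _ hm
      simp only at h
      apply Subtype.ext
      simp only [g, Prod.mk.injEq]
      constructor <;> omega
    have hσ : hinv.toPerm ^ (2 : ℕ) ^ (1 : ℕ) = 1 := by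
      have : (2 : ℕ) ^ (1 : ℕ) = 2 := by norm_num
      rw [this, sq]
      exact Equiv.ext hinv
    have hodd : ¬ (2 ∣ Fintype.card ↥Q) := by
      rw [Fintype.card_coe, hcard]; omega
    obtain ⟨a, ha⟩ := Equiv.Perm.exists_fixed_point_of_prime hodd hσ
    obtain ⟨⟨a1, a2⟩, hm⟩ := a
    have h := hbd _ hm
    simp only at h
    have ha' : ((n + 1 - a1 : ℕ), (n + 1 - a2 : ℕ)) = (a1, a2) :=
      congrArg Subtype.val ha
    simp only [Prod.mk.injEq] at ha'
    have e1 : a1 = (n + 1) / 2 := by omega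
    have e2 : a2 = (n + 1) / 2 := by omega
    rw [e1, e2] at hm
    exact hm
  -- the subset property
  have hU : borderU n ℓ ⊆ Q := by
    unfold borderU
    split
    · intro q hq
      simp only [Finset.mem_insert, Finset.mem_singleton] at hq
      rcases hq with rfl | rfl | rfl | rfl <;> assumption
    · rename_i h0
      have h41 : n % 4 = 1 := hmod.resolve_left h0
      intro q hq
      simp only [Finset.mem_union, Finset.mem_insert, Finset.mem_singleton] at hq
      rcases hq with (rfl | rfl | rfl | rfl) | rfl
      · exact hp
      · exact h4
      · exact h3
      · exact h2
      · exact hcenter h41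
  refine ⟨ℓ, ⟨Finset.mem_Icc.mpr ⟨hℓbd.2.2.1, hℓbd.2.2.2⟩, hU⟩, ?_⟩
  rintro ℓ' ⟨hℓ', hU'⟩
  have hmem : (1, ℓ') ∈ borderU n ℓ' := by
    unfold borderU
    split <;> simp
  have : ((1 : ℕ), ℓ') = (1, ℓ) := hrow _ (hU' hmem) _ hp rfl
  exact (Prod.mk.injEq _ _ _ _ ▸ this).2
end

section
/- Suppose n ≥ 6 with n ≡ 0 (mod 4) or n ≡ 1 (mod 4), and let ℓ ∈ [n]. If Q is an n-queens configuration fixed by the 90° rotation r with U_ℓ ⊆ Q, then U_ℓ ∪ s(Q ∖ U_ℓ) is again an n-queens configuration fixed by r and containing U_ℓ, and moreover s(Q ∖ U_ℓ) ≠ Q ∖ U_ℓ. -/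
open scoped Classical

lemma mem_board_iff {n : ℕ} {p : ℕ × ℕ} :
    p ∈ board n ↔ (1 ≤ p.1 ∧ p.1 ≤ n) ∧ (1 ≤ p.2 ∧ p.2 ≤ n) := by
  simp [board, Finset.mem_Icc]

/-- `r` maps `U_ℓ` into itself. -/
lemma borderU_r (n l : ℕ) (hmod : n % 4 = 0 ∨ n % 4 = 1)
    (hl1 : 1 ≤ l) (hl2 : l ≤ n) {p : ℕ × ℕ} (hp : p ∈ borderU n l) :
    (n + 1 - p.2, p.1) ∈ borderU n l := by
  unfold borderU at hp ⊢
  split_ifs at hp ⊢ with h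
  · simp only [Finset.mem_insert, Finset.mem_singleton] at hp ⊢
    rcases hp with rfl | rfl | rfl | rfl <;> simp [Prod.ext_iff] <;> omega
  · have h1 : n % 4 = 1 := by omega
    simp only [Finset.mem_union, Finset.mem_insert, Finset.mem_singleton] at hp ⊢
    rcases hp with (rfl | rfl | rfl | rfl) | rfl <;> simp [Prod.ext_iff] <;> omega

/-- `r⁻¹` maps `U_ℓ` into itself. -/
lemma borderU_rinv (n l : ℕ) (hmod : n % 4 = 0 ∨ n % 4 = 1)
    (hl1 : 1 ≤ l) (hl2 : l ≤ n) {p : ℕ × ℕ} (hp : p ∈ borderU n l) :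
    (p.2, n + 1 - p.1) ∈ borderU n l := by
  unfold borderU at hp ⊢
  split_ifs at hp ⊢ with h
  · simp only [Finset.mem_insert, Finset.mem_singleton] at hp ⊢
    rcases hp with rfl | rfl | rfl | rfl <;> simp [Prod.ext_iff] <;> omega
  · have h1 : n % 4 = 1 := by omega
    simp only [Finset.mem_union, Finset.mem_insert, Finset.mem_singleton] at hp ⊢
    rcases hp with (rfl | rfl | rfl | rfl) | rfl <;> simp [Prod.ext_iff] <;> omega

lemma quad_card_le (a b c d : ℕ × ℕ) : ({a, b, c, d} : Finset (ℕ × ℕ)).card ≤ 4 := by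
  calc ({a, b, c, d} : Finset (ℕ × ℕ)).card
      ≤ ({b, c, d} : Finset (ℕ × ℕ)).card + 1 := Finset.card_insert_le _ _
    _ ≤ (({c, d} : Finset (ℕ × ℕ)).card + 1) + 1 :=
        Nat.add_le_add_right (Finset.card_insert_le _ _) 1
    _ ≤ ((({d} : Finset (ℕ × ℕ)).card + 1) + 1) + 1 :=
        Nat.add_le_add_right (Nat.add_le_add_right (Finset.card_insert_le _ _) 1) 1
    _ = 4 := by simp

lemma borderU_card_le (n l : ℕ) : (borderU n l).card ≤ 5 := by
  unfold borderU
  split_ifs with h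
  · exact le_trans (quad_card_le _ _ _ _) (by norm_num)
  · refine le_trans (Finset.card_union_le _ _) ?_
    have h4 := quad_card_le (1, l) (l, n) (n, n + 1 - l) (n + 1 - l, 1)
    have h1 : ({((n + 1) / 2, (n + 1) / 2)} : Finset (ℕ × ℕ)).card = 1 := Finset.card_singleton _
    omega

/-- For `n ≥ 6` with `n ≡ 0` or `1 (mod 4)` and `ℓ ∈ [n]`: if `Q` is an `n`-queens
configuration fixed by `r` with `U_ℓ ⊆ Q`, then `U_ℓ ∪ s(Q \ U_ℓ)` is again an
`n`-queens configuration fixed by `r` containing `U_ℓ`, and `s(Q \ U_ℓ) ≠ Q \ U_ℓ`. -/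
theorem reflect_completion (n : ℕ) (hn : 6 ≤ n) (hmod : n % 4 = 0 ∨ n % 4 = 1)
    (l : ℕ) (hl : l ∈ Finset.Icc 1 n) (Q : Finset (ℕ × ℕ))
    (hQ : IsQueensConfig n Q) (hfix : rAct n Q = Q) (hU : borderU n l ⊆ Q) :
    IsQueensConfig n (borderU n l ∪ sAct n (Q \ borderU n l)) ∧
    rAct n (borderU n l ∪ sAct n (Q \ borderU n l)) =
      borderU n l ∪ sAct n (Q \ borderU n l) ∧
    borderU n l ⊆ borderU n l ∪ sAct n (Q \ borderU n l) ∧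
    sAct n (Q \ borderU n l) ≠ Q \ borderU n l := by
  obtain ⟨hsub, hcard, hrow, hcol, hdiag, hanti⟩ := hQ
  have hl1 : 1 ≤ l := (Finset.mem_Icc.1 hl).1
  have hl2 : l ≤ n := (Finset.mem_Icc.1 hl).2
  have hb : ∀ p ∈ Q, (1 ≤ p.1 ∧ p.1 ≤ n) ∧ (1 ≤ p.2 ∧ p.2 ≤ n) :=
    fun p hp => mem_board_iff.1 (hsub hp)
  set U := borderU n l with hUdef
  set X := Q \ U with hXdef
  have hXmem : ∀ x ∈ X, x ∈ Q := fun x hx => (Finset.mem_sdiff.1 hx).1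
  have hXU : ∀ x ∈ X, x ∉ U := fun x hx => (Finset.mem_sdiff.1 hx).2
  have hrU1 : ∀ p ∈ U, ((n + 1 - p.2, p.1) : ℕ × ℕ) ∈ U :=
    fun p hp => borderU_r n l hmod hl1 hl2 hp
  have hrU2 : ∀ p ∈ U, ((p.2, n + 1 - p.1) : ℕ × ℕ) ∈ U :=
    fun p hp => borderU_rinv n l hmod hl1 hl2 hp
  -- disjointness
  have hdisj : ∀ p ∈ U, p ∉ sAct n X := by
    intro p hp hps
    obtain ⟨x, hx, hxe⟩ := Finset.mem_image.1 hps
    have h1 : p.1 = x.1 := by rw [← hxe]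
    have h2 : p = x := hrow p (hU hp) x (hXmem x hx) h1
    exact hXU x hx (h2 ▸ hp)
  -- row condition
  have row' : ∀ p ∈ U ∪ sAct n X, ∀ q ∈ U ∪ sAct n X, p.1 = q.1 → p = q := by
    intro p hp q hq h
    rcases Finset.mem_union.1 hp with hp | hp <;> rcases Finset.mem_union.1 hq with hq | hq
    · exact hrow p (hU hp) q (hU hq) h
    · exfalso
      obtain ⟨y, hy, rfl⟩ := Finset.mem_image.1 hq
      have h2 : p = y := hrow p (hU hp) y (hXmem y hy) h
      exact hXU y hy (h2 ▸ hp)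
    · exfalso
      obtain ⟨x, hx, rfl⟩ := Finset.mem_image.1 hp
      have h2 : q = x := hrow q (hU hq) x (hXmem x hx) h.symm
      exact hXU x hx (h2 ▸ hq)
    · obtain ⟨x, hx, rfl⟩ := Finset.mem_image.1 hp
      obtain ⟨y, hy, rfl⟩ := Finset.mem_image.1 hq
      have h2 : x = y := hrow x (hXmem x hx) y (hXmem y hy) h
      rw [h2]
  -- column condition
  have col' : ∀ p ∈ U ∪ sAct n X, ∀ q ∈ U ∪ sAct n X, p.2 = q.2 → p = q := by
    intro p hp q hq h
    rcases Finset.mem_union.1 hp with hp | hp <;> rcases Finset.mem_union.1 hq with hq | hq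
    · exact hcol p (hU hp) q (hU hq) h
    · exfalso
      obtain ⟨y, hy, rfl⟩ := Finset.mem_image.1 hq
      have hu : ((n + 1 - p.1, n + 1 - p.2) : ℕ × ℕ) ∈ U := by
        have := hrU1 _ (hrU1 p hp); exact this
      have hbp := hb p (hU hp); have hby := hb y (hXmem y hy)
      have h2 : ((n + 1 - p.1, n + 1 - p.2) : ℕ × ℕ) = y := by
        refine hcol _ (hU hu) y (hXmem y hy) ?_
        show n + 1 - p.2 = y.2
        have h3 : p.2 = n + 1 - y.2 := h
        omega
      exact hXU y hy (h2 ▸ hu)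
    · exfalso
      obtain ⟨x, hx, rfl⟩ := Finset.mem_image.1 hp
      have hu : ((n + 1 - q.1, n + 1 - q.2) : ℕ × ℕ) ∈ U := by
        have := hrU1 _ (hrU1 q hq); exact this
      have hbq := hb q (hU hq); have hbx := hb x (hXmem x hx)
      have h2 : ((n + 1 - q.1, n + 1 - q.2) : ℕ × ℕ) = x := by
        refine hcol _ (hU hu) x (hXmem x hx) ?_
        show n + 1 - q.2 = x.2
        have h3 : n + 1 - x.2 = q.2 := h
        omega
      exact hXU x hx (h2 ▸ hu)
    · obtain ⟨x, hx, rfl⟩ := Finset.mem_image.1 hp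
      obtain ⟨y, hy, rfl⟩ := Finset.mem_image.1 hq
      have hbx := hb x (hXmem x hx); have hby := hb y (hXmem y hy)
      have h2 : x = y := by
        refine hcol x (hXmem x hx) y (hXmem y hy) ?_
        have h3 : n + 1 - x.2 = n + 1 - y.2 := h
        omega
      rw [h2]
  -- diagonal condition
  have diag' : ∀ p ∈ U ∪ sAct n X, ∀ q ∈ U ∪ sAct n X,
      p.2 + n - p.1 = q.2 + n - q.1 → p = q := by
    intro p hp q hq h
    rcases Finset.mem_union.1 hp with hp | hp <;> rcases Finset.mem_union.1 hq with hq | hq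
    · exact hdiag p (hU hp) q (hU hq) h
    · exfalso
      obtain ⟨y, hy, rfl⟩ := Finset.mem_image.1 hq
      have hu : ((n + 1 - p.2, p.1) : ℕ × ℕ) ∈ U := hrU1 p hp
      have hbp := hb p (hU hp); have hby := hb y (hXmem y hy)
      have h2 : ((n + 1 - p.2, p.1) : ℕ × ℕ) = y := by
        refine hanti _ (hU hu) y (hXmem y hy) ?_
        show (n + 1 - p.2) + p.1 - 1 = y.1 + y.2 - 1
        have h3 : p.2 + n - p.1 = (n + 1 - y.2) + n - y.1 := h
        omega
      exact hXU y hy (h2 ▸ hu)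
    · exfalso
      obtain ⟨x, hx, rfl⟩ := Finset.mem_image.1 hp
      have hu : ((n + 1 - q.2, q.1) : ℕ × ℕ) ∈ U := hrU1 q hq
      have hbq := hb q (hU hq); have hbx := hb x (hXmem x hx)
      have h2 : ((n + 1 - q.2, q.1) : ℕ × ℕ) = x := by
        refine hanti _ (hU hu) x (hXmem x hx) ?_
        show (n + 1 - q.2) + q.1 - 1 = x.1 + x.2 - 1
        have h3 : (n + 1 - x.2) + n - x.1 = q.2 + n - q.1 := h
        omega
      exact hXU x hx (h2 ▸ hu)
    · obtain ⟨x, hx, rfl⟩ := Finset.mem_image.1 hp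
      obtain ⟨y, hy, rfl⟩ := Finset.mem_image.1 hq
      have hbx := hb x (hXmem x hx); have hby := hb y (hXmem y hy)
      have h2 : x = y := by
        refine hanti x (hXmem x hx) y (hXmem y hy) ?_
        have h3 : (n + 1 - x.2) + n - x.1 = (n + 1 - y.2) + n - y.1 := h
        omega
      rw [h2]
  -- anti-diagonal condition
  have anti' : ∀ p ∈ U ∪ sAct n X, ∀ q ∈ U ∪ sAct n X,
      p.1 + p.2 - 1 = q.1 + q.2 - 1 → p = q := by
    intro p hp q hq h
    rcases Finset.mem_union.1 hp with hp | hp <;> rcases Finset.mem_union.1 hq with hq | hq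
    · exact hanti p (hU hp) q (hU hq) h
    · exfalso
      obtain ⟨y, hy, rfl⟩ := Finset.mem_image.1 hq
      have hu : ((p.2, n + 1 - p.1) : ℕ × ℕ) ∈ U := hrU2 p hp
      have hbp := hb p (hU hp); have hby := hb y (hXmem y hy)
      have h2 : ((p.2, n + 1 - p.1) : ℕ × ℕ) = y := by
        refine hdiag _ (hU hu) y (hXmem y hy) ?_
        show (n + 1 - p.1) + n - p.2 = y.2 + n - y.1
        have h3 : p.1 + p.2 - 1 = y.1 + (n + 1 - y.2) - 1 := h
        omega
      exact hXU y hy (h2 ▸ hu)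
    · exfalso
      obtain ⟨x, hx, rfl⟩ := Finset.mem_image.1 hp
      have hu : ((q.2, n + 1 - q.1) : ℕ × ℕ) ∈ U := hrU2 q hq
      have hbq := hb q (hU hq); have hbx := hb x (hXmem x hx)
      have h2 : ((q.2, n + 1 - q.1) : ℕ × ℕ) = x := by
        refine hdiag _ (hU hu) x (hXmem x hx) ?_
        show (n + 1 - q.1) + n - q.2 = x.2 + n - x.1
        have h3 : x.1 + (n + 1 - x.2) - 1 = q.1 + q.2 - 1 := h
        omega
      exact hXU x hx (h2 ▸ hu)
    · obtain ⟨x, hx, rfl⟩ := Finset.mem_image.1 hp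
      obtain ⟨y, hy, rfl⟩ := Finset.mem_image.1 hq
      have hbx := hb x (hXmem x hx); have hby := hb y (hXmem y hy)
      have h2 : x = y := by
        refine hdiag x (hXmem x hx) y (hXmem y hy) ?_
        have h3 : x.1 + (n + 1 - x.2) - 1 = y.1 + (n + 1 - y.2) - 1 := h
        omega
      rw [h2]
  -- subset of board
  have hsub' : U ∪ sAct n X ⊆ board n := by
    intro p hp
    rcases Finset.mem_union.1 hp with hp | hp
    · exact hsub (hU hp)
    · obtain ⟨x, hx, rfl⟩ := Finset.mem_image.1 hp
      have hbx := hb x (hXmem x hx)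
      exact mem_board_iff.2 ⟨⟨hbx.1.1, hbx.1.2⟩, by constructor <;> omega⟩
  -- cardinality
  have hdisj2 : Disjoint U (sAct n X) := Finset.disjoint_left.2 hdisj
  have hsX : (sAct n X).card = X.card := by
    refine Finset.card_image_of_injOn ?_
    intro x hx y hy hxy
    have hbx := hb x (hXmem x hx); have hby := hb y (hXmem y hy)
    have hxy' : ((x.1, n + 1 - x.2) : ℕ × ℕ) = (y.1, n + 1 - y.2) := hxy
    rw [Prod.mk.injEq] at hxy'
    have h1 : x.1 = y.1 := hxy'.1
    have h2 : n + 1 - x.2 = n + 1 - y.2 := hxy'.2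
    have h3 : x.2 = y.2 := by omega
    exact Prod.ext h1 h3
  have hUle : U.card ≤ n := hcard ▸ Finset.card_le_card hU
  have hXcard : X.card = n - U.card := by rw [hXdef, Finset.card_sdiff_of_subset hU, hcard]
  have hcard' : (U ∪ sAct n X).card = n := by
    rw [Finset.card_union_of_disjoint hdisj2, hsX, hXcard]
    omega
  -- r-fixedness
  have hUb : ∀ p ∈ U, (1 ≤ p.1 ∧ p.1 ≤ n) ∧ (1 ≤ p.2 ∧ p.2 ≤ n) := fun p hp => hb p (hU hp)
  have hrActU : rAct n U = U := by
    apply Finset.Subset.antisymm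
    · intro p hp
      obtain ⟨q, hq, rfl⟩ := Finset.mem_image.1 hp
      exact hrU1 q hq
    · intro p hp
      refine Finset.mem_image.2 ⟨(p.2, n + 1 - p.1), hrU2 p hp, ?_⟩
      have := hUb p hp
      refine Prod.ext ?_ rfl
      show n + 1 - (n + 1 - p.1) = p.1
      omega
  have hXfix : rAct n X = X := by
    apply Finset.Subset.antisymm
    · intro p hp
      obtain ⟨x, hx, rfl⟩ := Finset.mem_image.1 hp
      have hbx := hb x (hXmem x hx)
      refine Finset.mem_sdiff.2 ⟨?_, ?_⟩
      · rw [← hfix]; exact Finset.mem_image_of_mem _ (hXmem x hx)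
      · intro hpU
        have h2 := hrU2 _ hpU
        have h3 : ((x.1, n + 1 - (n + 1 - x.2)) : ℕ × ℕ) = x := by
          refine Prod.ext rfl ?_
          show n + 1 - (n + 1 - x.2) = x.2
          omega
        exact hXU x hx (h3 ▸ h2)
    · intro x hx
      have hbx := hb x (hXmem x hx)
      refine Finset.mem_image.2 ⟨(x.2, n + 1 - x.1), ?_, ?_⟩
      · refine Finset.mem_sdiff.2 ⟨?_, ?_⟩
        · have hxr : x ∈ rAct n Q := by rw [hfix]; exact hXmem x hx
          obtain ⟨y, hyQ, hye⟩ := Finset.mem_image.1 hxr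
          have hby := hb y hyQ
          have h1 : n + 1 - y.2 = x.1 := congrArg Prod.fst hye
          have h2 : y.1 = x.2 := congrArg Prod.snd hye
          have : y = (x.2, n + 1 - x.1) := by
            refine Prod.ext h2 ?_
            show y.2 = n + 1 - x.1
            omega
          exact this ▸ hyQ
        · intro hmem
          have h2 := hrU1 _ hmem
          have h3 : ((n + 1 - (n + 1 - x.1), x.2) : ℕ × ℕ) = x := by
            refine Prod.ext ?_ rfl
            show n + 1 - (n + 1 - x.1) = x.1
            omega
          exact hXU x hx (h3 ▸ h2)
      · refine Prod.ext ?_ rfl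
        show n + 1 - (n + 1 - x.1) = x.1
        omega
  have hsXfix : rAct n (sAct n X) = sAct n X := by
    have h1 : rAct n (sAct n X) = X.image (fun p => (p.2, p.1)) := by
      rw [sAct, rAct, Finset.image_image]
      refine Finset.image_congr ?_
      intro x hx
      have hbx := hb x (hXmem x hx)
      simp only [Function.comp]
      refine Prod.ext ?_ rfl
      show n + 1 - (n + 1 - x.2) = x.2
      omega
    rw [h1]
    conv_lhs => rw [← hXfix]
    rw [rAct, Finset.image_image]
    rfl
  have hfix' : rAct n (U ∪ sAct n X) = U ∪ sAct n X := by
    rw [rAct, Finset.image_union, ← rAct, ← rAct, hrActU, hsXfix]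
  -- the inequality
  have hne : sAct n X ≠ X := by
    intro hEq
    have hUc : U.card ≤ 5 := borderU_card_le n l
    have h8 : 8 ≤ n := by omega
    have h2 : 2 ≤ X.card := by rw [hXcard]; omega
    have hcolX : ∀ x ∈ X, 2 * x.2 = n + 1 := by
      intro x hx
      have hsx : ((x.1, n + 1 - x.2) : ℕ × ℕ) ∈ X := by
        rw [← hEq]; exact Finset.mem_image_of_mem _ hx
      have hbx := hb x (hXmem x hx)
      have h3 : x = (x.1, n + 1 - x.2) := hrow x (hXmem x hx) _ (hXmem _ hsx) rfl
      have h4 : x.2 = n + 1 - x.2 := congrArg Prod.snd h3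
      omega
    obtain ⟨x, hx, y, hy, hxy⟩ := Finset.one_lt_card.1 h2
    refine hxy (hcol x (hXmem x hx) y (hXmem y hy) ?_)
    have hx2 := hcolX x hx
    have hy2 := hcolX y hy
    omega
  exact ⟨⟨hsub', hcard', row', col', diag', anti'⟩, hfix', Finset.subset_union_left, hne⟩
end
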